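/- arXiv:2603.22601 — 9 statements merged into one kernel-verified Lean document; each statement's English description precedes it below -/
import Mathlib

section
/- Let E be a symmetric real v×v idempotent matrix (E² = E = Eᵀ) of rank m such that EJ = 0. If dim ⟨J,E⟩∘ = 2, then m+1 divides v and E = ((m+1)/v)·K − (1/v)·J, where K is a 01-matrix permutation-similar to I_{m+1} ⊗ J_{v/(m+1)}. -/
/-!
Because `⟨J, E⟩∘` is spanned by `J` and `E`, we have `E ∘ E = x J + y E`: every entry of `E` is a
root of `t² = x + y t`, so `E` takes at most two values. Symmetry and idempotence give
`∑ₗ Eᵢₗ Eⱼₗ = Eᵢⱼ`. With the zero row sums this makes the diagonal constant, hence equal to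
`tr E / v = m / v`; it also gives `∑ₗ (Eᵢₗ - Eⱼₗ)² = Eᵢᵢ + Eⱼⱼ - 2 Eᵢⱼ`, so `Eᵢⱼ = m / v` means that
rows `i` and `j` coincide, an equivalence relation whose classes are the diagonal blocks of `K`.
In a single row the entries sum to `0` and their squares to `m / v`; this forces the other value to
be `-1 / v` and each class to have `v / (m + 1)` elements.
-/

open Matrix Finset Kronecker SimpleGraph

/-- The all-ones matrix `J`. -/
def matJ (α β : Type*) : Matrix α β ℝ := Matrix.of fun _ _ => 1

/-- Hadamard (entrywise) powers of a matrix; the 0-th power is the all-ones matrix `J`. -/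
def hadPow {V : Type*} (E : Matrix V V ℝ) : ℕ → Matrix V V ℝ
  | 0 => matJ V V
  | n + 1 => Matrix.hadamard E (hadPow E n)

/-- The idempotent `∘`-algebra `⟨J, E⟩∘`: the linear span over `ℝ` of `J` together with all
Hadamard powers `E, E∘E, E∘E∘E, …` of `E`. -/
noncomputable def hadSpan {V : Type*} (E : Matrix V V ℝ) : Submodule ℝ (Matrix V V ℝ) :=
  Submodule.span ℝ (Set.range (hadPow E))

/-- The adjacency algebra of a graph with adjacency matrix `A`:
the linear span over `ℝ` of the powers `I, A, A², …` of `A`. -/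
noncomputable def adjAlg {V : Type*} [Fintype V] [DecidableEq V] (A : Matrix V V ℝ) :
    Submodule ℝ (Matrix V V ℝ) :=
  Submodule.span ℝ (Set.range fun n : ℕ => A ^ n)

/-- `A` and `B` are permutation-similar: `B = PᵀAP` for a permutation matrix `P`,
i.e. `A` can be obtained from `B` by simultaneous re-indexing of rows and columns
along a bijection of the index types. -/
def PermSimilar {α β : Type*} (A : Matrix α α ℝ) (B : Matrix β β ℝ) : Prop :=
  ∃ e : α ≃ β, ∀ i j, A i j = B (e i) (e j)

/-- The multiplicity of `μ` as an eigenvalue of the square matrix `A`, i.e. the dimension of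
the eigenspace `ker (μ•I − A)`. -/
noncomputable def eigMult {V : Type*} [Fintype V] [DecidableEq V]
    (A : Matrix V V ℝ) (μ : ℝ) : ℕ :=
  Module.finrank ℝ (LinearMap.ker (Matrix.toLin' (μ • (1 : Matrix V V ℝ) - A)))

/-- `E` is the spectral idempotent of `A` for the eigenvalue `μ`: the real symmetric matrix
with `E² = E`, `A·E = μ·E`, and `rank E = dim ker (μI − A)`; equivalently, the matrix of the
orthogonal projection onto the eigenspace `ker (μI − A)`. -/
def IsSpectralIdempotent {V : Type*} [Fintype V] [DecidableEq V]
    (A E : Matrix V V ℝ) (μ : ℝ) : Prop :=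
  E.IsSymm ∧ E * E = E ∧ A * E = μ • E ∧ E.rank = eigMult A μ

open Classical in
/-- The map `c` describes an indubitable partition of `G` with parameters `(a, b)`:
the cells of the partition are the fibers of `c`, and for each cell `P` and each vertex `x`
the number of neighbors of `x` in `P` equals `a` if `x ∈ P` and `b` otherwise. -/
def IsIndubitable {V ι : Type*} (G : SimpleGraph V) (c : V → ι) (a b : ℕ) : Prop :=
  Function.Surjective c ∧
    ∀ (i : ι) (x : V), {y : V | G.Adj x y ∧ c y = i}.ncard = if c x = i then a else b

/-- `G` has a full indubitable partition corresponding to the eigenvalue `μ` of multiplicity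
`m`: an indubitable partition with `m + 1` cells and parameters `(a, b)` with `a − b = μ`. -/
def HasFullIndubitable {V : Type*} (G : SimpleGraph V) (μ : ℝ) (m : ℕ) : Prop :=
  ∃ (c : V → Fin (m + 1)) (a b : ℕ), IsIndubitable G c a b ∧ (a : ℝ) - (b : ℝ) = μ

instance {α β : Type*} [DecidableEq α] [DecidableEq β] (G : SimpleGraph α) (H : SimpleGraph β)
    [DecidableRel G.Adj] [DecidableRel H.Adj] : DecidableRel (G □ H).Adj := fun x y =>
  inferInstanceAs (Decidable ((G.Adj x.1 y.1 ∧ x.2 = y.2) ∨ (H.Adj x.2 y.2 ∧ x.1 = y.1)))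

theorem matJ_hadamard_matJ (V : Type*) : matJ V V ⊙ matJ V V = matJ V V := by
  ext
  simp [matJ]

theorem hadPow_one {V : Type*} (E : Matrix V V ℝ) : hadPow E 1 = E := by
  ext
  simp [hadPow, matJ]

theorem hadSpan_le_span_matJ {V : Type*} {E : Matrix V V ℝ}
    (hE : E ∈ Submodule.span ℝ {matJ V V}) : hadSpan E ≤ Submodule.span ℝ {matJ V V} := by
  obtain ⟨a, rfl⟩ := Submodule.mem_span_singleton.1 hE
  rw [hadSpan, Submodule.span_le]
  rintro _ ⟨n, rfl⟩
  induction n with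
  | zero => exact Submodule.mem_span_singleton_self _
  | succ n ih =>
    obtain ⟨b, hb⟩ := Submodule.mem_span_singleton.1 ih
    refine Submodule.mem_span_singleton.2 ⟨a * b, ?_⟩
    rw [hadPow, ← hb, smul_hadamard, hadamard_smul, matJ_hadamard_matJ, smul_smul]

theorem notMem_span_matJ_of_one_lt_finrank {V : Type*} {E : Matrix V V ℝ}
    (h : 1 < Module.finrank ℝ (hadSpan E)) : E ∉ Submodule.span ℝ {matJ V V} := fun hE => by
  have := (Submodule.finrank_mono (hadSpan_le_span_matJ hE)).trans
    (finrank_span_le_card ({matJ V V} : Set (Matrix V V ℝ)))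
  rw [Set.toFinset_singleton, card_singleton] at this
  omega

theorem exists_forall_mul_self_eq_of_finrank_hadSpan_eq_two {V : Type*} [Fintype V]
    {E : Matrix V V ℝ} (h : Module.finrank ℝ (hadSpan E) = 2) :
    ∃ x y : ℝ, ∀ i j, E i j * E i j = x + y * E i j := by
  have hE := notMem_span_matJ_of_one_lt_finrank (h ▸ one_lt_two)
  have hJ : matJ V V ≠ 0 := fun hJ => hE <| by
    have : IsEmpty V := ⟨fun i => one_ne_zero (congrFun (congrFun hJ i) i)⟩
    simp [Subsingleton.elim E 0]
  have hind : LinearIndependent ℝ ![matJ V V, E] := (LinearIndependent.pair_iff' hJ).2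
    fun a ha => hE (ha ▸ Submodule.smul_mem _ a (Submodule.mem_span_singleton_self _))
  have hspan : Submodule.span ℝ (Set.range ![matJ V V, E]) = hadSpan E := by
    refine Submodule.eq_of_le_of_finrank_eq ?_ (by rw [finrank_span_eq_card hind, h]; simp)
    rw [Submodule.span_le, Set.range_subset_iff, Fin.forall_fin_two]
    exact ⟨Submodule.subset_span ⟨0, rfl⟩, Submodule.subset_span ⟨1, hadPow_one E⟩⟩
  have hsq : hadPow E 2 ∈ Submodule.span ℝ (Set.range ![matJ V V, E]) :=
    hspan ▸ Submodule.subset_span ⟨2, rfl⟩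
  obtain ⟨c, hc⟩ := (Submodule.mem_span_range_iff_exists_fun ℝ).1 hsq
  refine ⟨c 0, c 1, fun i j => ?_⟩
  simpa [Fin.sum_univ_two, hadPow, matJ] using (congrFun (congrFun hc i) j).symm

theorem Matrix.trace_eq_rank_of_mul_self_eq {K V : Type*} [Field K] [Fintype V]
    {E : Matrix V V K} (h : E * E = E) : E.trace = E.rank := by
  classical
  have hE : IsIdempotentElem (toLin' E) := by
    rw [IsIdempotentElem, Module.End.mul_eq_comp, ← Matrix.toLin'_mul, h]
  rw [← Matrix.trace_toLin'_eq, ((LinearMap.isProj_range_iff_isIdempotentElem _).2 hE).trace,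
    Matrix.rank, Matrix.toLin'_apply']

theorem eq_or_eq_sub_of_mul_self_eq {R : Type*} [CommRing R] [NoZeroDivisors R] {x y s t : R}
    (hs : s * s = x + y * s) (ht : t * t = x + y * t) : t = s ∨ t = y - s := by
  have : (t - s) * (t - (y - s)) = 0 := by linear_combination ht - hs
  rcases mul_eq_zero.1 this with h | h
  exacts [Or.inl (sub_eq_zero.1 h), Or.inr (sub_eq_zero.1 h)]

theorem card_filter_mul_sub_eq_one_and_eq_neg_one_div_card {ι K : Type*} [Fintype ι] [Field K]
    [DecidableEq K] {r : ι → K} {α β : K} (hα : α ≠ 0) (hval : ∀ l, r l = α ∨ r l = β)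
    (hsum : ∑ l, r l = 0) (hsq : ∑ l, r l * r l = α) :
    (#{l | r l = α} : K) * (α - β) = 1 ∧ β = -1 / Fintype.card ι := by
  have hind (l : ι) : r l - β = (α - β) * if r l = α then 1 else 0 := by
    split_ifs with h
    · rw [h, mul_one]
    · rw [(hval l).resolve_left h]
      ring
  have hone : ∑ l, (r l - β) = 1 := by
    refine mul_left_cancel₀ hα ?_
    -- `r l - β` vanishes unless `r l = α`
    calc α * ∑ l, (r l - β) = ∑ l, (r l - β) * r l := by
          rw [mul_sum]
          refine sum_congr rfl fun l _ => ?_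
          rcases hval l with h | h <;> rw [h] <;> ring
      _ = α * 1 := by simp only [sub_mul, sum_sub_distrib, ← mul_sum, hsq, hsum]; ring
  refine ⟨?_, ?_⟩
  · rw [← hone]
    simp only [hind, ← mul_sum, sum_boole]
    ring
  · rw [sum_sub_distrib, hsum, sum_const, card_univ, nsmul_eq_mul, zero_sub, neg_eq_iff_eq_neg]
      at hone
    have hcard : (Fintype.card ι : K) ≠ 0 := left_ne_zero_of_mul (b := β) (by simp [hone])
    rw [eq_div_iff hcard, mul_comm, hone]

section IdempotentMatrix

variable {V : Type*} [Fintype V]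

theorem sum_apply_mul_apply_eq_of_mul_self_eq {R : Type*} [CommSemiring R] {E : Matrix V V R}
    (hsymm : E.IsSymm) (hidem : E * E = E) (i j : V) : ∑ l, E i l * E j l = E i j := by
  conv_rhs => rw [← hidem, mul_apply]
  exact sum_congr rfl fun l _ => by rw [hsymm.apply j l]

theorem sum_apply_eq_zero_of_mul_matJ_eq_zero {E : Matrix V V ℝ} (hEJ : E * matJ V V = 0)
    (i : V) : ∑ l, E i l = 0 := by
  simpa [mul_apply, matJ] using congrFun (congrFun hEJ i) i

variable {E : Matrix V V ℝ} (hgram : ∀ i j, ∑ l, E i l * E j l = E i j)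
include hgram

theorem apply_self_eq_rank_div_card (hidem : E * E = E) (hrow : ∀ i, ∑ l, E i l = 0) {x y : ℝ}
    (hquad : ∀ i j, E i j * E i j = x + y * E i j) (i : V) :
    E i i = E.rank / Fintype.card V := by
  classical
  have hconst (i : V) : E i i = Fintype.card V * x := by
    rw [← hgram i i, sum_congr rfl fun l _ => hquad i l, sum_add_distrib, ← mul_sum, hrow]
    simp
  have htrace : (Fintype.card V : ℝ) * (Fintype.card V * x) = E.rank := by
    rw [← trace_eq_rank_of_mul_self_eq hidem]
    simp [trace, hconst]
  have : Nonempty V := ⟨i⟩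
  rw [hconst, eq_div_iff (Nat.cast_ne_zero.2 Fintype.card_ne_zero), ← htrace, mul_comm]

theorem eq_zero_of_forall_apply_self_eq_zero (hdiag : ∀ i, E i i = 0) : E = 0 := by
  ext i l
  refine mul_self_eq_zero.1 ((sum_eq_zero_iff_of_nonneg fun l _ => mul_self_nonneg (E i l)).1 ?_
    l (mem_univ l))
  rw [hgram, hdiag]

variable {α : ℝ} (hdiag : ∀ i, E i i = α)
include hdiag

theorem apply_eq_apply_of_apply_eq {i j : V} (hij : E i j = α) (l : V) : E i l = E j l := by
  have hsq : ∑ l, (E i l - E j l) * (E i l - E j l) = 0 := by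
    simp only [sub_mul, mul_sub, sum_sub_distrib, hgram, mul_comm (E j _) (E i _)]
    rw [hdiag, hdiag, hij]
    ring
  exact sub_eq_zero.1 (mul_self_eq_zero.1
    ((sum_eq_zero_iff_of_nonneg fun l _ => mul_self_nonneg _).1 hsq l (mem_univ l)))

theorem equivalence_apply_eq (hsymm : E.IsSymm) : Equivalence fun i j => E i j = α :=
  ⟨hdiag, fun {i j} h => (hsymm.apply i j).trans h,
    fun hij hjl => (apply_eq_apply_of_apply_eq hgram hdiag hij _).trans hjl⟩

end IdempotentMatrix

theorem eq_smul_indicator_add_smul_matJ {V : Type*} {E : Matrix V V ℝ} {α β : ℝ}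
    (hval : ∀ i j, E i j = α ∨ E i j = β) :
    E = (α - β) • of (fun i j => if E i j = α then 1 else 0) + β • matJ V V := by
  ext i j
  by_cases h : E i j = α
  · simp [h, matJ]
  · simp only [Matrix.add_apply, Matrix.smul_apply, of_apply, if_neg h, matJ, smul_eq_mul]
    rw [(hval i j).resolve_left h]
    ring

theorem exists_equiv_prod_fin_of_card_fiber {V ι : Type*} [Fintype V] [DecidableEq ι] (c : V → ι)
    {k : ℕ} (hc : ∀ a, Fintype.card {x // c x = a} = k) : ∃ e : V ≃ ι × Fin k, ∀ x, (e x).1 = c x :=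
  ⟨(Equiv.sigmaFiberEquiv c).symm.trans
    (Equiv.sigmaEquivProdOfEquiv fun a => Fintype.equivFinOfCardEq (hc a)), fun _ => rfl⟩

theorem permSimilar_one_kronecker_matJ {V : Type*} [Fintype V] {r : V → V → Prop}
    [DecidableRel r] (hr : Equivalence r) {n k : ℕ} (hk : ∀ x, #{y | r x y} = k)
    (hV : Fintype.card V = n * k) :
    PermSimilar (of fun i j => if r i j then (1 : ℝ) else 0)
      ((1 : Matrix (Fin n) (Fin n) ℝ) ⊗ₖ matJ (Fin k) (Fin k)) := by
  obtain rfl | hk0 := k.eq_zero_or_pos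
  · have : IsEmpty V := Fintype.card_eq_zero_iff.1 (by simp [hV])
    exact ⟨Fintype.equivOfCardEq (by simp), isEmptyElim⟩
  let s : Setoid V := ⟨r, hr⟩
  have hfib (q : Quotient s) : Fintype.card {x // Quotient.mk s x = q} = k := by
    rw [← hk q.out, ← Fintype.card_subtype]
    exact Fintype.card_congr (Equiv.subtypeEquivRight fun x => Quotient.mk_eq_iff_out.trans
      ⟨hr.symm, hr.symm⟩)
  obtain ⟨e, he⟩ := exists_equiv_prod_fin_of_card_fiber (Quotient.mk s) hfib
  have hQ : Fintype.card (Quotient s) = n := Nat.eq_of_mul_eq_mul_right hk0 <| by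
    rw [← hV, Fintype.card_congr e, Fintype.card_prod, Fintype.card_fin]
  refine ⟨e.trans ((Fintype.equivFinOfCardEq hQ).prodCongr (Equiv.refl _)), fun i j => ?_⟩
  simp only [of_apply, matJ, Equiv.trans_apply, Equiv.prodCongr_apply, kroneckerMap_apply,
    one_apply, Prod.map_fst, he, EmbeddingLike.apply_eq_iff_eq, Quotient.eq, mul_one]
  rfl

/-- Lemma 1D. Let `E` be a symmetric real `v×v` idempotent matrix of rank `m`
with `EJ = 0`. If `dim ⟨J,E⟩∘ = 2`, then `m+1 ∣ v` and `E = ((m+1)/v)•K − (1/v)•J`, where `K`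
is a 01-matrix permutation-similar to `I_{m+1} ⊗ J_{v/(m+1)}`. -/
theorem statement1 (v m : ℕ) (E : Matrix (Fin v) (Fin v) ℝ)
    (hsymm : E.IsSymm) (hidem : E * E = E) (hrank : E.rank = m)
    (hEJ : E * matJ (Fin v) (Fin v) = 0)
    (hdim : Module.finrank ℝ (hadSpan E) = 2) :
    (m + 1) ∣ v ∧
    ∃ K : Matrix (Fin v) (Fin v) ℝ,
      (∀ i j, K i j = 0 ∨ K i j = 1) ∧
      PermSimilar K ((1 : Matrix (Fin (m + 1)) (Fin (m + 1)) ℝ) ⊗ₖ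
        matJ (Fin (v / (m + 1))) (Fin (v / (m + 1)))) ∧
      E = (((m : ℝ) + 1) / (v : ℝ)) • K - ((1 : ℝ) / (v : ℝ)) • matJ (Fin v) (Fin v) := by
  classical
  obtain ⟨x, y, hquad⟩ := exists_forall_mul_self_eq_of_finrank_hadSpan_eq_two hdim
  have hE := notMem_span_matJ_of_one_lt_finrank (hdim ▸ one_lt_two)
  have hv : 0 < v := Nat.pos_of_ne_zero fun hv => hE (by subst hv; simp [Subsingleton.elim E 0])
  have hgram := sum_apply_mul_apply_eq_of_mul_self_eq hsymm hidem
  have hrow := sum_apply_eq_zero_of_mul_matJ_eq_zero hEJ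
  set α : ℝ := m / v with hα_def
  have hdiag (i : Fin v) : E i i = α := by
    simpa [hrank] using apply_self_eq_rank_div_card hgram hidem hrow hquad i
  have hα : α ≠ 0 := fun h =>
    hE (by simp [eq_zero_of_forall_apply_self_eq_zero hgram (by simpa [h] using hdiag)])
  have hval (i j : Fin v) : E i j = α ∨ E i j = y - α :=
    eq_or_eq_sub_of_mul_self_eq (hdiag i ▸ hquad i i) (hquad i j)
  have hrow_count (i : Fin v) := card_filter_mul_sub_eq_one_and_eq_neg_one_div_card hα (hval i)
    (hrow i) ((hgram i i).trans (hdiag i))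
  have hβ : y - α = -1 / v := by simpa using (hrow_count ⟨0, hv⟩).2
  have hgap : α - -1 / v = (m + 1) / v := by rw [hα_def]; ring
  have hcount (i : Fin v) : #{j | E i j = α} * (m + 1) = v := by
    have := (hrow_count i).1
    rw [hβ, hgap, mul_div_assoc', div_eq_one_iff_eq (by positivity)] at this
    exact_mod_cast this
  have hdvd : (m + 1) ∣ v := Dvd.intro_left _ (hcount ⟨0, hv⟩)
  refine ⟨hdvd, of fun i j => if E i j = α then 1 else 0,
    fun i j => by by_cases h : E i j = α <;> simp [h],
    permSimilar_one_kronecker_matJ (equivalence_apply_eq hgram hdiag hsymm)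
      (fun i => (Nat.div_eq_of_eq_mul_left m.succ_pos (hcount i).symm).symm)
      (by rw [Fintype.card_fin, Nat.mul_div_cancel' hdvd]), ?_⟩
  conv_lhs => rw [eq_smul_indicator_add_smul_matJ hval]
  rw [hβ, hgap, neg_div, neg_smul, ← sub_eq_add_neg]
end

section
/- Let Γ be a connected regular graph on v vertices whose adjacency algebra 𝒜 contains a 01-matrix K permutation-similar to I_{m+1} ⊗ J_{v/(m+1)}. Then the distinct columns of K are the characteristic (indicator) vectors of an equitable partition of Γ into m+1 cells, each of size v/(m+1). -/
open Matrix Finset Kronecker SimpleGraph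

/-- Proposition bC, second part. If the adjacency algebra of a connected
regular graph `Γ` on `v` vertices contains a 01-matrix `K` permutation-similar to
`I_{m+1} ⊗ J_{v/(m+1)}`, then the distinct columns of `K` are the characteristic vectors of an
equitable partition of `Γ` into `m+1` cells, each of size `v/(m+1)`. Here the cells are the
classes of the relation "having equal columns of `K`". -/
theorem statement3 (v k m : ℕ) (G : SimpleGraph (Fin v)) [DecidableRel G.Adj]
    (hconn : G.Connected) (hreg : G.IsRegularOfDegree k)
    (K : Matrix (Fin v) (Fin v) ℝ) (hKA : K ∈ adjAlg (G.adjMatrix ℝ))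
    (hK01 : ∀ i j, K i j = 0 ∨ K i j = 1)
    (hKsim : PermSimilar K ((1 : Matrix (Fin (m + 1)) (Fin (m + 1)) ℝ) ⊗ₖ
      matJ (Fin (v / (m + 1))) (Fin (v / (m + 1))))) :
    -- each column of `K` is the characteristic vector of the cell of its index
    (∀ x y : Fin v, K x y = 1 ↔ (fun i => K i x) = (fun i => K i y)) ∧
    -- the partition into cells is equitable
    (∀ x x' y : Fin v, (fun i => K i x) = (fun i => K i x') →
      {z : Fin v | G.Adj x z ∧ (fun i => K i z) = (fun i => K i y)}.ncard =
      {z : Fin v | G.Adj x' z ∧ (fun i => K i z) = (fun i => K i y)}.ncard) ∧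
    -- there are `m + 1` cells
    {s : Set (Fin v) | ∃ y : Fin v, s = {x : Fin v | (fun i => K i x) = (fun i => K i y)}}.ncard
      = m + 1 ∧
    -- each cell has size `v / (m + 1)`
    (∀ y : Fin v, {x : Fin v | (fun i => K i x) = (fun i => K i y)}.ncard = v / (m + 1)) := by
  classical
  obtain ⟨e, he⟩ := hKsim
  set A := G.adjMatrix ℝ with hA
  -- entry formula for K
  have hKe : ∀ i j, K i j = if (e i).1 = (e j).1 then (1:ℝ) else 0 := by
    intro i j
    rw [he i j]
    simp [Matrix.kroneckerMap_apply, matJ, Matrix.one_apply]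
  -- column equality characterization
  have hcol : ∀ x y : Fin v, ((fun i => K i x) = (fun i => K i y)) ↔ (e x).1 = (e y).1 := by
    intro x y
    constructor
    · intro h
      have hx := congrFun h x
      rw [hKe, hKe] at hx
      by_contra hne
      simp [hne] at hx
    · intro h
      funext i
      rw [hKe, hKe, h]
  -- nonemptiness
  have hnv : Nonempty (Fin v) := hconn.nonempty
  have hb0 : Nonempty (Fin (v / (m+1))) := ⟨(e (Classical.arbitrary _)).2⟩
  obtain ⟨b0⟩ := hb0
  have hn0 : 0 < v / (m+1) := b0.pos
  -- cardinality of each cell as a finset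
  have hcardcell : ∀ c : Fin (m+1),
      (univ.filter fun x : Fin v => (e x).1 = c).card = v / (m+1) := by
    intro c
    have := Finset.card_bij (fun (x : Fin v) (_ : x ∈ univ.filter fun x => (e x).1 = c) => (e x).2)
      (fun a ha => Finset.mem_univ _)
      (by
        intro a ha b hb hab
        simp only [Finset.mem_filter] at ha hb
        have : e a = e b := Prod.ext (ha.2.trans hb.2.symm) hab
        exact e.injective this)
      (by
        intro b _
        refine ⟨e.symm (c, b), ?_, ?_⟩
        · simp
        · simp)
    simpa using this
  -- K commutes with A
  have hcomm : ∀ X ∈ adjAlg A, A * X = X * A := by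
    intro X hX
    refine Submodule.span_induction ?_ ?_ ?_ ?_ hX
    · rintro x ⟨j, rfl⟩
      exact ((Commute.refl A).pow_right j).eq
    · simp
    · intro x y _ _ hx hy
      rw [Matrix.mul_add, Matrix.add_mul, hx, hy]
    · intro r x _ hx
      rw [Matrix.mul_smul, Matrix.smul_mul, hx]
  have hAK : A * K = K * A := hcomm K hKA
  -- K * K = n • K
  have hKK : K * K = ((v / (m+1) : ℕ) : ℝ) • K := by
    ext x y
    rw [Matrix.mul_apply]
    have hterm : ∀ z, K x z * K z y =
        if ((e z).1 = (e x).1 ∧ (e x).1 = (e y).1) then (1:ℝ) else 0 := by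
      intro z
      rw [hKe, hKe]
      by_cases h1 : (e x).1 = (e z).1
      · by_cases h2 : (e z).1 = (e y).1
        · rw [if_pos h1, if_pos h2, if_pos ⟨h1.symm, h1.trans h2⟩, one_mul]
        · rw [if_pos h1, if_neg h2, mul_zero, if_neg]
          rintro ⟨hz, hxy⟩
          exact h2 (hz.trans hxy)
      · rw [if_neg h1, zero_mul, if_neg]
        rintro ⟨hz, _⟩
        exact h1 hz.symm
    rw [Finset.sum_congr rfl fun z _ => hterm z]
    by_cases h : (e x).1 = (e y).1
    · simp only [h, and_true]
      rw [Finset.sum_boole, hcardcell]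
      rw [Matrix.smul_apply, hKe, if_pos h]
      simp
    · simp only [h, and_false, if_false, Finset.sum_const_zero]
      rw [Matrix.smul_apply, hKe, if_neg h]
      simp
  -- K * (A * K) = n • (A * K)
  have hKAK : K * (A * K) = ((v / (m+1) : ℕ) : ℝ) • (A * K) := by
    calc K * (A * K) = K * A * K := (mul_assoc _ _ _).symm
      _ = A * K * K := by rw [hAK]
      _ = A * (K * K) := mul_assoc _ _ _
      _ = A * (((v / (m+1) : ℕ) : ℝ) • K) := by rw [hKK]
      _ = ((v / (m+1) : ℕ) : ℝ) • (A * K) := Matrix.mul_smul _ _ _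
  -- (A * K) x y counts neighbors of x in the cell of y
  have hcount : ∀ x y : Fin v, (A * K) x y =
      ((univ.filter fun z : Fin v => G.Adj x z ∧ (e z).1 = (e y).1).card : ℝ) := by
    intro x y
    rw [Matrix.mul_apply]
    have hterm : ∀ z, A x z * K z y =
        if (G.Adj x z ∧ (e z).1 = (e y).1) then (1:ℝ) else 0 := by
      intro z
      rw [hA, SimpleGraph.adjMatrix_apply, hKe]
      by_cases h1 : G.Adj x z <;> by_cases h2 : (e z).1 = (e y).1 <;> simp [h1, h2]
    rw [Finset.sum_congr rfl fun z _ => hterm z, Finset.sum_boole]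
  -- rows of A*K in the same cell agree
  have hrows : ∀ x x' y : Fin v, (e x).1 = (e x').1 → (A * K) x y = (A * K) x' y := by
    intro x x' y hxx'
    have h1 : ∀ w : Fin v, (K * (A * K)) w y =
        ∑ z ∈ univ.filter (fun z : Fin v => (e z).1 = (e w).1), (A * K) z y := by
      intro w
      rw [Matrix.mul_apply, Finset.sum_filter]
      refine Finset.sum_congr rfl fun z _ => ?_
      rw [hKe]
      by_cases h : (e w).1 = (e z).1
      · rw [if_pos h, if_pos h.symm, one_mul]
      · rw [if_neg h, if_neg fun hh => h hh.symm, zero_mul]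
    have h2 : ((v / (m+1) : ℕ) : ℝ) * (A * K) x y = ((v / (m+1) : ℕ) : ℝ) * (A * K) x' y := by
      have e1 := congrFun (congrFun hKAK x) y
      have e2 := congrFun (congrFun hKAK x') y
      rw [h1 x] at e1
      rw [h1 x'] at e2
      rw [Matrix.smul_apply, smul_eq_mul] at e1 e2
      rw [← e1, ← e2, hxx']
    have hne : ((v / (m+1) : ℕ) : ℝ) ≠ 0 := by
      exact_mod_cast hn0.ne'
    exact mul_left_cancel₀ hne h2
  -- ncard of the neighbor sets as finset cards
  have hncard : ∀ x y : Fin v,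
      {z : Fin v | G.Adj x z ∧ (fun i => K i z) = (fun i => K i y)}.ncard =
      (univ.filter fun z : Fin v => G.Adj x z ∧ (e z).1 = (e y).1).card := by
    intro x y
    have hset : {z : Fin v | G.Adj x z ∧ (fun i => K i z) = (fun i => K i y)} =
        {z : Fin v | G.Adj x z ∧ (e z).1 = (e y).1} := by
      ext z
      simp only [Set.mem_setOf_eq]
      exact and_congr_right fun _ => hcol z y
    rw [hset, Set.ncard_eq_toFinset_card', Set.toFinset_setOf]
  refine ⟨?_, ?_, ?_, ?_⟩
  · -- part 1
    intro x y
    rw [hcol, hKe]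
    constructor
    · intro h
      by_contra hne
      rw [if_neg hne] at h
      exact one_ne_zero h.symm
    · intro h
      rw [if_pos h]
  · -- part 2: equitable
    intro x x' y hxx'
    rw [hcol] at hxx'
    have h := hrows x x' y hxx'
    rw [hcount, hcount] at h
    have : (univ.filter fun z : Fin v => G.Adj x z ∧ (e z).1 = (e y).1).card =
        (univ.filter fun z : Fin v => G.Adj x' z ∧ (e z).1 = (e y).1).card := by
      exact_mod_cast h
    rw [hncard, hncard, this]
  · -- part 3: m+1 cells
    have hrange : {s : Set (Fin v) | ∃ y : Fin v,
        s = {x : Fin v | (fun i => K i x) = (fun i => K i y)}} =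
        Set.range (fun c : Fin (m+1) => {x : Fin v | (e x).1 = c}) := by
      ext s
      simp only [Set.mem_setOf_eq, Set.mem_range]
      constructor
      · rintro ⟨y, rfl⟩
        refine ⟨(e y).1, ?_⟩
        ext x
        simp only [Set.mem_setOf_eq]
        exact (hcol x y).symm
      · rintro ⟨c, rfl⟩
        refine ⟨e.symm (c, b0), ?_⟩
        ext x
        simp only [Set.mem_setOf_eq, hcol]
        simp
    have hfinj : Function.Injective (fun c : Fin (m+1) => {x : Fin v | (e x).1 = c}) := by
      intro c c' hcc'
      simp only [Set.ext_iff, Set.mem_setOf_eq] at hcc'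
      have := (hcc' (e.symm (c, b0))).mp (by simp)
      simpa using this
    rw [hrange, ← Set.image_univ, Set.ncard_image_of_injective _ hfinj, Set.ncard_univ,
      Nat.card_eq_fintype_card, Fintype.card_fin]
  · -- part 4: cell sizes
    intro y
    have hset : {x : Fin v | (fun i => K i x) = (fun i => K i y)} =
        {x : Fin v | (e x).1 = (e y).1} := by
      ext x
      exact hcol x y
    rw [hset, Set.ncard_eq_toFinset_card', Set.toFinset_setOf, hcardcell]
end

section
/- Let Γ be a connected k-regular graph on v vertices that has an eigenvalue λ with multiplicity m and corresponding spectral idempotent E_λ, and let ℰ = ⟨J, E_λ⟩∘. If Γ has a full indubitable partition corresponding to λ, then dim ℰ = 2. -/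
open Matrix Finset Kronecker SimpleGraph

set_option linter.unusedSectionVars false
set_option linter.unnecessarySeqFocus false
variable {V : Type*} [Fintype V] [DecidableEq V] {m : ℕ}


lemma ncard_eq_filter (p : V → Prop) [DecidablePred p] :
    {y | p y}.ncard = (univ.filter p).card := by
  rw [Set.ncard_eq_toFinset_card']; simp [Set.toFinset_setOf]

open Classical in
lemma fiber_card (G : SimpleGraph V) [DecidableRel G.Adj] (c : V → Fin (m+1)) (a b : ℕ)
    (hcount : ∀ (i : Fin (m+1)) (x : V),
      {y : V | G.Adj x y ∧ c y = i}.ncard = if c x = i then a else b)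
    (i : Fin (m+1)) (x : V) :
    (univ.filter fun y => G.Adj x y ∧ c y = i).card = if c x = i then a else b := by
  rw [← ncard_eq_filter]; exact hcount i x

open Classical in
lemma deg_eq (G : SimpleGraph V) [DecidableRel G.Adj] (c : V → Fin (m+1)) (a b k : ℕ)
    (hcount : ∀ (i : Fin (m+1)) (x : V),
      {y : V | G.Adj x y ∧ c y = i}.ncard = if c x = i then a else b)
    (hreg : G.IsRegularOfDegree k) (x : V) : k = a + m * b := by
  have h1 : (G.neighborFinset x).card = ∑ i : Fin (m+1),
      ((G.neighborFinset x).filter fun y => c y = i).card :=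
    Finset.card_eq_sum_card_fiberwise (fun y _ => mem_univ (c y))
  have h2 : ∀ i, ((G.neighborFinset x).filter fun y => c y = i).card
      = if c x = i then a else b := by
    intro i
    rw [← fiber_card G c a b hcount i x]
    congr 1; ext y; simp [mem_neighborFinset]
  have h3 : ∑ i : Fin (m+1), (if c x = i then a else b) = a + m * b := by
    rw [← Finset.sum_filter_add_sum_filter_not univ (fun i => c x = i)]
    have e1 : univ.filter (fun i => c x = i) = {c x} := by ext i; simp [eq_comm]
    have e2 : (univ.filter fun i => ¬ c x = i).card = m := by
      have : (univ.filter fun i => ¬ c x = i) = univ \ {c x} := by ext i; simp [eq_comm]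
      rw [this, card_sdiff_of_subset (by simp)]; simp
    rw [e1]
    simp only [sum_singleton, if_pos rfl]
    rw [Finset.sum_congr rfl (fun i hi => if_neg (mem_filter.mp hi).2), Finset.sum_const, e2]
    simp [Nat.add_comm, Nat.mul_comm]
  calc k = G.degree x := (hreg x).symm
    _ = (G.neighborFinset x).card := rfl
    _ = _ := by rw [h1, Finset.sum_congr rfl (fun i _ => h2 i), h3]

open Classical in
lemma b_pos (G : SimpleGraph V) [DecidableRel G.Adj] (c : V → Fin (m+1)) (a b : ℕ)
    (hcount : ∀ (i : Fin (m+1)) (x : V),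
      {y : V | G.Adj x y ∧ c y = i}.ncard = if c x = i then a else b)
    (hsurj : Function.Surjective c) (hconn : G.Connected) (hm0 : 0 < m) : 0 < b := by
  by_contra hb
  push_neg at hb
  interval_cases b
  have hadj : ∀ x y, G.Adj x y → c x = c y := by
    intro x y hxy
    by_contra hne
    have h := hcount (c y) x
    rw [if_neg hne] at h
    have : y ∈ {z : V | G.Adj x z ∧ c z = c y} := ⟨hxy, rfl⟩
    have hfin : {z : V | G.Adj x z ∧ c z = c y}.Finite := Set.toFinite _
    have hemp := (Set.ncard_eq_zero hfin).mp h
    rw [Set.eq_empty_iff_forall_notMem] at hemp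
    exact hemp y ⟨hxy, rfl⟩
  have hreach : ∀ x y : V, G.Reachable x y → c x = c y := by
    intro x y hr
    obtain ⟨p⟩ := hr
    induction p with
    | nil => rfl
    | cons h p ih => exact (hadj _ _ h).trans ih
  obtain ⟨x0, hx0⟩ := hsurj 0
  obtain ⟨x1, hx1⟩ := hsurj 1
  have : (0 : Fin (m+1)) = 1 := by
    rw [← hx0, ← hx1]; exact hreach x0 x1 (hconn x0 x1)
  have h01 : (0 : Fin (m+1)).val = (1 : Fin (m+1)).val := by rw [this]
  simp [Fin.val_one, Nat.mod_eq_of_lt (by omega : 1 < m + 1)] at h01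

open Classical in
lemma cell_size (G : SimpleGraph V) [DecidableRel G.Adj] (c : V → Fin (m+1)) (a b : ℕ)
    (hfib : ∀ (i : Fin (m+1)) (x : V),
      (univ.filter fun y => G.Adj x y ∧ c y = i).card = if c x = i then a else b)
    (hb : 0 < b) (i j : Fin (m+1)) :
    (univ.filter fun x => c x = i).card = (univ.filter fun x => c x = j).card := by
  rcases eq_or_ne i j with rfl | hij
  · rfl
  have key : ∀ p q : Fin (m+1), p ≠ q →
      ∑ x : V, ∑ y : V, (if G.Adj x y ∧ c x = p ∧ c y = q then 1 else 0)
        = (univ.filter fun x => c x = p).card * b := by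
    intro p q hpq
    have inner : ∀ x : V, (∑ y : V, if G.Adj x y ∧ c x = p ∧ c y = q then 1 else 0)
        = if c x = p then b else 0 := by
      intro x
      by_cases hx : c x = p
      · have hb' := hfib q x
        rw [if_neg (by rw [hx]; exact hpq)] at hb'
        rw [if_pos hx, ← hb', Finset.card_filter]
        exact Finset.sum_congr rfl fun y _ => by simp [hx]
      · rw [if_neg hx]
        exact Finset.sum_eq_zero fun y _ => by simp [hx]
    rw [Finset.sum_congr rfl fun x _ => inner x, ← Finset.sum_filter, Finset.sum_const,
      smul_eq_mul]
  have swap : ∑ x : V, ∑ y : V, (if G.Adj x y ∧ c x = i ∧ c y = j then 1 else 0)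
      = ∑ x : V, ∑ y : V, (if G.Adj x y ∧ c x = j ∧ c y = i then 1 else 0) := by
    rw [Finset.sum_comm]
    exact Finset.sum_congr rfl fun x _ => Finset.sum_congr rfl fun y _ => by
      congr 1
      simp only [eq_iff_iff]
      constructor
      · rintro ⟨h1, h2, h3⟩; exact ⟨h1.symm, h3, h2⟩
      · rintro ⟨h1, h2, h3⟩; exact ⟨h1.symm, h3, h2⟩
  have := (key i j hij).symm.trans (swap.trans (key j i hij.symm))
  exact Nat.eq_of_mul_eq_mul_right hb this

open Classical in
noncomputable def Bmat (c : V → Fin (m+1)) : Matrix V V ℝ :=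
  Matrix.of fun x y => if c x = c y then 1 else 0

section prods
variable (c : V → Fin (m+1)) {n : ℕ} (hn : ∀ i, (univ.filter fun x => c x = i).card = n)
include hn

open Classical in
lemma ind_sum (i : Fin (m+1)) : (∑ z : V, if c z = i then (1:ℝ) else 0) = n := by
  rw [Finset.sum_boole, hn i]

omit hn in
lemma JJ : matJ V V * matJ V V = (Fintype.card V : ℝ) • matJ V V := by
  ext x y
  simp only [Matrix.mul_apply, matJ, Matrix.of_apply, Matrix.smul_apply, smul_eq_mul, mul_one,
    one_mul]
  rw [Finset.sum_const, Fintype.card, nsmul_eq_mul, mul_one]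

lemma BJ : Bmat c * matJ V V = (n : ℝ) • matJ V V := by
  ext x y
  simp only [Matrix.mul_apply, Bmat, matJ, Matrix.of_apply, Matrix.smul_apply, smul_eq_mul,
    mul_one]
  rw [← ind_sum c hn (c x)]
  refine Finset.sum_congr rfl fun z _ => ?_
  by_cases hz : c x = c z
  · rw [if_pos hz, if_pos hz.symm]
  · rw [if_neg hz, if_neg (fun h => hz h.symm)]

lemma JB : matJ V V * Bmat c = (n : ℝ) • matJ V V := by
  ext x y
  simp only [Matrix.mul_apply, Bmat, matJ, Matrix.of_apply, Matrix.smul_apply, smul_eq_mul,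
    one_mul, mul_one]
  exact ind_sum c hn (c y)

lemma BB : Bmat c * Bmat c = (n : ℝ) • Bmat c := by
  ext x y
  simp only [Matrix.mul_apply, Bmat, Matrix.of_apply, Matrix.smul_apply, smul_eq_mul]
  by_cases h : c x = c y
  · rw [if_pos h, mul_one, ← ind_sum c hn (c x)]
    refine Finset.sum_congr rfl fun z _ => ?_
    by_cases hz : c z = c x
    · rw [if_pos hz.symm, if_pos (hz.trans h), if_pos hz, one_mul]
    · rw [if_neg (fun hh => hz hh.symm), if_neg hz, zero_mul]
  · rw [if_neg h, mul_zero]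
    refine Finset.sum_eq_zero fun z _ => ?_
    by_cases hz : c x = c z
    · rw [if_neg (fun hh : c z = c y => h (hz.trans hh)), mul_zero]
    · rw [if_neg hz, zero_mul]

open Classical in
omit hn in
lemma AB (G : SimpleGraph V) [DecidableRel G.Adj] (a b : ℕ)
    (hfib : ∀ (i : Fin (m+1)) (x : V),
      (univ.filter fun y => G.Adj x y ∧ c y = i).card = if c x = i then a else b) :
    G.adjMatrix ℝ * Bmat c = ((a : ℝ) - b) • Bmat c + (b : ℝ) • matJ V V := by
  ext x y
  simp only [Matrix.mul_apply, Bmat, matJ, Matrix.of_apply, Matrix.add_apply,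
    Matrix.smul_apply, smul_eq_mul, mul_one, adjMatrix_apply]
  have : (∑ z : V, (if G.Adj x z then (1:ℝ) else 0) * (if c z = c y then 1 else 0))
      = ((univ.filter fun z => G.Adj x z ∧ c z = c y).card : ℝ) := by
    rw [Finset.card_filter]
    push_cast
    exact Finset.sum_congr rfl fun z _ => by
      by_cases h1 : G.Adj x z <;> by_cases h2 : c z = c y <;> simp [h1, h2]
  rw [this, hfib (c y) x]
  by_cases h : c x = c y <;> simp [h]

omit hn in
lemma AJ (G : SimpleGraph V) [DecidableRel G.Adj] (k : ℕ) (hreg : G.IsRegularOfDegree k) :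
    G.adjMatrix ℝ * matJ V V = (k : ℝ) • matJ V V := by
  ext x y
  simp only [Matrix.mul_apply, matJ, Matrix.of_apply, Matrix.smul_apply, smul_eq_mul, mul_one,
    adjMatrix_apply]
  rw [Finset.sum_boole]
  have : (univ.filter fun z => G.Adj x z) = G.neighborFinset x := by
    ext z; simp [mem_neighborFinset]
  rw [this]
  rw [show (G.neighborFinset x).card = k from hreg x]

end prods

section Fmat
variable (c : V → Fin (m+1)) {n : ℕ} (hn : ∀ i, (univ.filter fun x => c x = i).card = n)
  (hv : Fintype.card V = (m+1) * n) (hn0 : 0 < n)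

lemma Fsymm : ((((m:ℝ)+1)/(Fintype.card V : ℝ)) • Bmat c
    + (-(1/(Fintype.card V : ℝ))) • matJ V V).IsSymm := by
  show _ᵀ = _
  rw [Matrix.transpose_add, Matrix.transpose_smul, Matrix.transpose_smul]
  congr 1
  · congr 1
    ext x y
    simp only [Matrix.transpose_apply, Bmat, Matrix.of_apply]
    by_cases h : c x = c y
    · rw [if_pos h, if_pos h.symm]
    · rw [if_neg h, if_neg (fun hh => h hh.symm)]

include hn hv hn0 in
lemma FF : ((((m:ℝ)+1)/(Fintype.card V : ℝ)) • Bmat c + (-(1/(Fintype.card V : ℝ))) • matJ V V)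
    * ((((m:ℝ)+1)/(Fintype.card V : ℝ)) • Bmat c + (-(1/(Fintype.card V : ℝ))) • matJ V V)
    = (((m:ℝ)+1)/(Fintype.card V : ℝ)) • Bmat c + (-(1/(Fintype.card V : ℝ))) • matJ V V := by
  have hvR : (Fintype.card V : ℝ) = ((m:ℝ)+1) * n := by rw [hv]; push_cast; ring
  have hv0 : (Fintype.card V : ℝ) ≠ 0 := by
    rw [hvR]; positivity
  set γ : ℝ := ((m:ℝ)+1)/(Fintype.card V : ℝ) with hγ
  set δ : ℝ := -(1/(Fintype.card V : ℝ)) with hδ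
  have hγn : γ * n = 1 := by
    rw [hγ, div_mul_eq_mul_div, hvR, div_eq_one_iff_eq (by rw [← hvR]; exact hv0)]
  have hδv : δ * (Fintype.card V) = -1 := by
    rw [hδ]; field_simp
  rw [add_mul, mul_add, mul_add, smul_mul_assoc, smul_mul_assoc, smul_mul_assoc,
    smul_mul_assoc, mul_smul_comm, mul_smul_comm, mul_smul_comm, mul_smul_comm,
    BB c hn, JB c hn, BJ c hn, JJ]
  simp only [smul_smul]
  have comb : ∀ (x y z w : ℝ), x • Bmat c + y • matJ V V + (z • matJ V V + w • matJ V V)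
      = x • Bmat c + (y + z + w) • matJ V V := by
    intro x y z w; module
  rw [comb]
  congr 1
  · congr 1
    linear_combination γ * hγn
  · congr 1
    linear_combination 2*δ*hγn + δ*hδv
end Fmat

section AF
open Classical in
lemma AF (c : V → Fin (m+1)) {n : ℕ} (hv : Fintype.card V = (m+1) * n) (hn0 : 0 < n)
    (G : SimpleGraph V) [DecidableRel G.Adj] (a b k : ℕ)
    (hfib : ∀ (i : Fin (m+1)) (x : V),
      (univ.filter fun y => G.Adj x y ∧ c y = i).card = if c x = i then a else b)
    (hreg : G.IsRegularOfDegree k) (hk : k = a + m * b) (lam : ℝ) (hlam : (a:ℝ) - b = lam) :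
    G.adjMatrix ℝ * ((((m:ℝ)+1)/(Fintype.card V : ℝ)) • Bmat c
      + (-(1/(Fintype.card V : ℝ))) • matJ V V)
    = lam • ((((m:ℝ)+1)/(Fintype.card V : ℝ)) • Bmat c
      + (-(1/(Fintype.card V : ℝ))) • matJ V V) := by
  have hvR : (Fintype.card V : ℝ) = ((m:ℝ)+1) * n := by rw [hv]; push_cast; ring
  have hv0 : (Fintype.card V : ℝ) ≠ 0 := by rw [hvR]; positivity
  have hkR : (k:ℝ) = a + m * b := by rw [hk]; push_cast; ring
  set γ : ℝ := ((m:ℝ)+1)/(Fintype.card V : ℝ) with hγ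
  set δ : ℝ := -(1/(Fintype.card V : ℝ)) with hδ
  rw [mul_add, mul_smul_comm, mul_smul_comm, AB c G a b hfib, AJ G k hreg]
  have comb : ∀ (x y z : ℝ), x • Bmat c + y • matJ V V + z • matJ V V
      = x • Bmat c + (y + z) • matJ V V := by
    intro x y z; module
  simp only [smul_add, smul_smul]
  rw [comb]
  congr 1
  · congr 1
    linear_combination γ * hlam
  · congr 1
    have hδv : δ * (Fintype.card V : ℝ) = -1 := by rw [hδ]; field_simp
    have hγv : γ * (Fintype.card V : ℝ) = (m:ℝ)+1 := by rw [hγ]; field_simp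
    have hv' : ((γ * b) + (δ * k)) * (Fintype.card V : ℝ)
        = (lam * δ) * (Fintype.card V : ℝ) := by
      calc ((γ * b) + (δ * k)) * (Fintype.card V : ℝ)
          = (γ * (Fintype.card V : ℝ)) * b + (δ * (Fintype.card V : ℝ)) * k := by ring
        _ = ((m:ℝ)+1) * b + (-1) * k := by rw [hδv, hγv]
        _ = -((a:ℝ) - b) := by rw [hkR]; ring
        _ = lam * (δ * (Fintype.card V : ℝ)) := by rw [hδv, hlam]; ring
        _ = (lam * δ) * (Fintype.card V : ℝ) := by ring
    exact mul_right_cancel₀ hv0 hv'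
end AF

section proj
variable (A E F : Matrix V V ℝ)

lemma mulVec_single_col (M : Matrix V V ℝ) (x y : V) : (M *ᵥ Pi.single y 1) x = M x y := by
  simp [Matrix.mulVec, dotProduct, Pi.single_apply]

lemma range_le_ker (μ : ℝ) (M : Matrix V V ℝ) (hM : A * M = μ • M) :
    LinearMap.range M.mulVecLin
      ≤ LinearMap.ker (Matrix.toLin' (μ • (1 : Matrix V V ℝ) - A)) := by
  rintro _ ⟨z, rfl⟩
  rw [LinearMap.mem_ker, Matrix.toLin'_apply, Matrix.mulVecLin_apply, Matrix.mulVec_mulVec]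
  have : (μ • (1 : Matrix V V ℝ) - A) * M = 0 := by
    rw [Matrix.sub_mul, Matrix.smul_mul, Matrix.one_mul, hM, sub_self]
  rw [this, Matrix.zero_mulVec]

lemma proj_eq (hEs : E.IsSymm) (hEE : E * E = E) (hFs : F.IsSymm) (hFF : F * F = F)
    (hrange : LinearMap.range E.mulVecLin = LinearMap.range F.mulVecLin) : E = F := by
  have idE : ∀ w, w ∈ LinearMap.range E.mulVecLin → E *ᵥ w = w := by
    rintro _ ⟨z, rfl⟩
    rw [Matrix.mulVecLin_apply, Matrix.mulVec_mulVec, hEE]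
  have idF : ∀ w, w ∈ LinearMap.range F.mulVecLin → F *ᵥ w = w := by
    rintro _ ⟨z, rfl⟩
    rw [Matrix.mulVecLin_apply, Matrix.mulVec_mulVec, hFF]
  have hEF : E * F = F := by
    ext x y
    rw [← mulVec_single_col (E * F) x y, ← mulVec_single_col F x y, ← Matrix.mulVec_mulVec]
    rw [idE _ (hrange ▸ LinearMap.mem_range_self _ _)]
  have hFE : F * E = E := by
    ext x y
    rw [← mulVec_single_col (F * E) x y, ← mulVec_single_col E x y, ← Matrix.mulVec_mulVec]
    rw [idF _ (hrange ▸ LinearMap.mem_range_self _ _)]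
  have : Eᵀ = F := by
    conv_lhs => rw [← hFE]
    rw [Matrix.transpose_mul, hEs, hFs, hEF]
  rw [← hEs, this]
end proj

section rankF
open Classical in
lemma rankF_ge (c : V → Fin (m+1)) (hsurj : Function.Surjective c)
    (hV : (Fintype.card V : ℝ) ≠ 0) :
    m ≤ Module.finrank ℝ (LinearMap.range
      (((((m:ℝ)+1)/(Fintype.card V : ℝ)) • Bmat c
        + (-(1/(Fintype.card V : ℝ))) • matJ V V).mulVecLin)) := by
  set γ : ℝ := ((m:ℝ)+1)/(Fintype.card V : ℝ) with hγ
  set δ : ℝ := -(1/(Fintype.card V : ℝ)) with hδ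
  have hγ0 : γ ≠ 0 := by
    rw [hγ]; positivity
  have hδ0 : δ ≠ 0 := by
    rw [hδ]; simp [hV]
  set F : Matrix V V ℝ := γ • Bmat c + δ • matJ V V with hF
  set g : Fin (m+1) → V := Function.surjInv hsurj with hgdef
  have hg : ∀ i, c (g i) = i := fun i => Function.surjInv_eq hsurj i
  set u : Fin m → (V → ℝ) := fun i => F.mulVecLin (Pi.single (g i.succ) 1) with hudef
  have hu : ∀ (i : Fin m) (z : V), u i z = γ * (if c z = i.succ then 1 else 0) + δ := by
    intro i z
    rw [hudef]
    simp only [Matrix.mulVecLin_apply, mulVec_single_col, hF, Matrix.add_apply,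
      Matrix.smul_apply, Bmat, matJ, Matrix.of_apply, smul_eq_mul, mul_one, hg]
  have hu0 : ∀ i : Fin m, u i (g 0) = δ := by
    intro i
    rw [hu i (g 0), hg, if_neg (fun h => (Fin.succ_ne_zero i) h.symm), mul_zero, zero_add]
  have huj : ∀ (i j : Fin m), u i (g j.succ) = γ * (if i = j then 1 else 0) + δ := by
    intro i j
    rw [hu i (g j.succ), hg]
    congr 2
    simp [Fin.succ_inj, eq_comm]
  have hindep : LinearIndependent ℝ u := by
    rw [Fintype.linearIndependent_iff]
    intro t ht
    have hev : ∀ z : V, (∑ i, t i * u i z) = 0 := by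
      intro z
      have := congrFun ht z
      simpa [Finset.sum_apply, Pi.smul_apply, smul_eq_mul] using this
    have h0 : (∑ i, t i) = 0 := by
      have := hev (g 0)
      rw [Finset.sum_congr rfl (fun i _ => by rw [hu0 i]), ← Finset.sum_mul] at this
      exact (mul_eq_zero.mp this).resolve_right hδ0
    intro j
    have hj := hev (g j.succ)
    rw [Finset.sum_congr rfl (fun i _ => by rw [huj i j])] at hj
    have expand : ∀ i : Fin m, t i * (γ * (if i = j then (1:ℝ) else 0) + δ)
        = (if i = j then t i * γ else 0) + t i * δ := by
      intro i; by_cases h : i = j <;> simp [h] <;> ring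
    rw [Finset.sum_congr rfl (fun i _ => expand i), Finset.sum_add_distrib,
      Finset.sum_ite_eq' univ j (fun i => t i * γ), if_pos (mem_univ j),
      ← Finset.sum_mul, h0, zero_mul, add_zero] at hj
    exact (mul_eq_zero.mp hj).resolve_right hγ0
  have hle : Submodule.span ℝ (Set.range u) ≤ LinearMap.range F.mulVecLin := by
    rw [Submodule.span_le]
    rintro _ ⟨i, rfl⟩
    exact LinearMap.mem_range_self _ _
  have := Submodule.finrank_mono hle
  rwa [finrank_span_eq_card hindep, Fintype.card_fin] at this
end rankF

section hadsec
variable (c : V → Fin (m+1)) (γ δ : ℝ)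

lemma hadPow_eq (nn : ℕ) : hadPow (γ • Bmat c + δ • matJ V V) nn
    = ((γ + δ)^nn - δ^nn) • Bmat c + (δ^nn) • matJ V V := by
  induction nn with
  | zero =>
    simp only [hadPow, pow_zero, sub_self, zero_smul, one_smul, zero_add]
  | succ n ih =>
    rw [hadPow, ih]
    ext x y
    simp only [Matrix.hadamard_apply, Matrix.add_apply, Matrix.smul_apply, Bmat, matJ,
      Matrix.of_apply, smul_eq_mul, mul_one]
    by_cases h : c x = c y
    · simp only [h, if_true, eq_self_iff_true]; ring
    · simp only [h, if_false]; ring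

lemma hadSpan_eq (hγ0 : γ ≠ 0) :
    hadSpan (γ • Bmat c + δ • matJ V V) = Submodule.span ℝ {Bmat c, matJ V V} := by
  apply le_antisymm
  · rw [hadSpan, Submodule.span_le]
    rintro _ ⟨nn, rfl⟩
    rw [hadPow_eq]
    exact Submodule.add_mem _
      (Submodule.smul_mem _ _ (Submodule.subset_span (by simp)))
      (Submodule.smul_mem _ _ (Submodule.subset_span (by simp)))
  · rw [Submodule.span_le]
    rintro X hX
    have hJ : matJ V V ∈ hadSpan (γ • Bmat c + δ • matJ V V) :=
      Submodule.subset_span ⟨0, rfl⟩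
    have hF1 : γ • Bmat c + δ • matJ V V ∈ hadSpan (γ • Bmat c + δ • matJ V V) := by
      have h1 : hadPow (γ • Bmat c + δ • matJ V V) 1 = γ • Bmat c + δ • matJ V V := by
        rw [hadPow_eq, pow_one, pow_one, add_sub_cancel_right]
      exact Submodule.subset_span ⟨1, h1⟩
    have hB : Bmat c ∈ hadSpan (γ • Bmat c + δ • matJ V V) := by
      have hmem := Submodule.smul_mem _ γ⁻¹
        (Submodule.sub_mem _ hF1 (Submodule.smul_mem _ δ hJ))
      rwa [add_sub_cancel_right, smul_smul, inv_mul_cancel₀ hγ0, one_smul] at hmem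
    rcases hX with h | h
    · rw [h]; exact hB
    · rw [Set.mem_singleton_iff.mp h]; exact hJ

open Classical in
lemma finrank_BJ (hm0 : 0 < m) (hsurj : Function.Surjective c) :
    Module.finrank ℝ (Submodule.span ℝ {Bmat c, matJ V V}) = 2 := by
  have h01 : (0 : Fin (m+1)) ≠ 1 := by
    intro h
    have h' : ((0 : Fin (m+1)) : ℕ) = ((1 : Fin (m+1)) : ℕ) := congrArg Fin.val h
    rw [Fin.val_zero, Fin.val_one', Nat.mod_eq_of_lt (by omega)] at h'
    omega
  obtain ⟨x0, hx0⟩ := hsurj 0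
  obtain ⟨x1, hx1⟩ := hsurj 1
  have hindep : LinearIndependent ℝ ![Bmat c, matJ V V] := by
    rw [LinearIndependent.pair_iff]
    intro s t hst
    have h1 := congrFun (congrFun (congrArg (fun M : Matrix V V ℝ => (M : V → V → ℝ)) hst) x0) x1
    have h2 := congrFun (congrFun (congrArg (fun M : Matrix V V ℝ => (M : V → V → ℝ)) hst) x0) x0
    simp only [Matrix.add_apply, Matrix.smul_apply, Bmat, matJ, Matrix.of_apply,
      smul_eq_mul, mul_one, Matrix.zero_apply] at h1 h2
    rw [if_neg (by rw [hx0, hx1]; exact h01), mul_zero, zero_add] at h1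
    simp only [if_pos rfl, if_true, mul_one] at h2
    exact ⟨by linarith, h1⟩
  have hrange : Set.range ![Bmat c, matJ V V] = {Bmat c, matJ V V} := by
    simp [Matrix.range_cons, Matrix.range_empty, Set.pair_comm]
  rw [← hrange, finrank_span_eq_card hindep, Fintype.card_fin]
end hadsec

/-- Proposition pe. Let `Γ` be a connected `k`-regular graph on `v` vertices
with an eigenvalue `λ` of multiplicity `m`, spectral idempotent `E_λ` and `ℰ = ⟨J, E_λ⟩∘`.
If `Γ` has a full indubitable partition corresponding to `λ`, then `dim ℰ = 2`. -/
theorem statement5 (v k m : ℕ) (G : SimpleGraph (Fin v)) [DecidableRel G.Adj]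
    (hconn : G.Connected) (hreg : G.IsRegularOfDegree k)
    (lam : ℝ) (hm : eigMult (G.adjMatrix ℝ) lam = m) (hm0 : 0 < m)
    (E : Matrix (Fin v) (Fin v) ℝ) (hE : IsSpectralIdempotent (G.adjMatrix ℝ) E lam)
    (hfull : HasFullIndubitable G lam m) :
    Module.finrank ℝ (hadSpan E) = 2 := by
  classical
  obtain ⟨c, a, b, ⟨hsurj, hcount0⟩, hlam⟩ := hfull
  have hcount : ∀ (i : Fin (m+1)) (x : Fin v),
      {y : Fin v | G.Adj x y ∧ c y = i}.ncard = if c x = i then a else b := by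
    intro i x
    rw [hcount0 i x]
    congr
  haveI : Nonempty (Fin v) := hconn.nonempty
  have hfib : ∀ (i : Fin (m+1)) (x : Fin v),
      (univ.filter fun y => G.Adj x y ∧ c y = i).card = if c x = i then a else b :=
    fiber_card G c a b hcount
  have hk : k = a + m * b := deg_eq G c a b k hcount hreg (Classical.arbitrary _)
  have hb : 0 < b := b_pos G c a b hcount hsurj hconn hm0
  set n : ℕ := (univ.filter fun x => c x = (0 : Fin (m+1))).card with hndef
  have hn : ∀ i, (univ.filter fun x => c x = i).card = n :=
    fun i => cell_size G c a b hfib hb i 0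
  have hv' : Fintype.card (Fin v) = (m+1) * n := by
    have h1 : (univ : Finset (Fin v)).card
        = ∑ i : Fin (m+1), (univ.filter fun x => c x = i).card :=
      Finset.card_eq_sum_card_fiberwise (fun x _ => mem_univ (c x))
    rw [Fintype.card, h1, Finset.sum_congr rfl (fun i _ => hn i), Finset.sum_const,
      card_univ, Fintype.card_fin, smul_eq_mul]
  have hn0 : 0 < n := by
    rw [hndef]
    obtain ⟨x0, hx0⟩ := hsurj 0
    exact Finset.card_pos.mpr ⟨x0, by simp [hx0]⟩
  have hVpos : (0:ℝ) < (Fintype.card (Fin v) : ℝ) := by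
    rw [hv']; positivity
  have hVne : ((Fintype.card (Fin v) : ℝ)) ≠ 0 := ne_of_gt hVpos
  have hγ0 : (((m:ℝ)+1)/(Fintype.card (Fin v) : ℝ)) ≠ 0 := by positivity
  set A := G.adjMatrix ℝ with hAdef
  set F : Matrix (Fin v) (Fin v) ℝ := (((m:ℝ)+1)/(Fintype.card (Fin v) : ℝ)) • Bmat c
      + (-(1/(Fintype.card (Fin v) : ℝ))) • matJ (Fin v) (Fin v) with hFdef
  have hFs : F.IsSymm := Fsymm c
  have hFF : F * F = F := FF c hn hv' hn0
  have hAF : A * F = lam • F := AF c hv' hn0 G a b k hfib hreg hk lam hlam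
  have hWrank : Module.finrank ℝ
      (LinearMap.ker (Matrix.toLin' (lam • (1 : Matrix (Fin v) (Fin v) ℝ) - A))) = m := hm
  have hErange : LinearMap.range E.mulVecLin
      = LinearMap.ker (Matrix.toLin' (lam • (1 : Matrix (Fin v) (Fin v) ℝ) - A)) := by
    apply Submodule.eq_of_le_of_finrank_eq (range_le_ker A lam E hE.2.2.1)
    rw [hWrank]
    exact hE.2.2.2.trans hm
  have hFrange : LinearMap.range F.mulVecLin
      = LinearMap.ker (Matrix.toLin' (lam • (1 : Matrix (Fin v) (Fin v) ℝ) - A)) := by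
    apply Submodule.eq_of_le_of_finrank_le (range_le_ker A lam F hAF)
    rw [hWrank]
    exact rankF_ge c hsurj hVne
  have hEF : E = F := proj_eq E F hE.1 hE.2.1 hFs hFF (hErange.trans hFrange.symm)
  rw [hEF, hFdef, hadSpan_eq c _ _ hγ0, finrank_BJ c hm0 hsurj]
end

section
/- Let Γ be a connected regular graph with an eigenvalue λ of multiplicity m. If Π and Π' are both full indubitable partitions of Γ corresponding to λ, then Π = Π'. In other words, a connected regular graph has at most one full indubitable partition corresponding to a given eigenvalue. -/
open Matrix Finset Kronecker SimpleGraph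

/-! ### Auxiliary machinery for statement6 -/

/-- Indicator vector of the cell `c⁻¹(i)`. -/
def chiS6 {v m : ℕ} (c : Fin v → Fin (m+1)) (i : Fin (m+1)) : Fin v → ℝ :=
  fun x => if c x = i then 1 else 0

open Classical in
lemma s6_mulVec {v m : ℕ} (G : SimpleGraph (Fin v)) [DecidableRel G.Adj]
    (c : Fin v → Fin (m+1)) (a b : ℕ) (h : IsIndubitable G c a b) (i : Fin (m+1)) (x : Fin v) :
    (G.adjMatrix ℝ *ᵥ chiS6 c i) x = ((a:ℝ) - b) * chiS6 c i x + b := by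
  rw [adjMatrix_mulVec_apply]
  have hset : {y : Fin v | G.Adj x y ∧ c y = i}.ncard
      = ((G.neighborFinset x).filter fun y => c y = i).card := by
    rw [Set.ncard_eq_toFinset_card']
    congr 1
    ext y
    simp [mem_neighborFinset]
  have hsum : (∑ u ∈ G.neighborFinset x, chiS6 c i u)
      = (((G.neighborFinset x).filter fun y => c y = i).card : ℝ) := by
    simp [chiS6, Finset.sum_boole]
  rw [hsum, ← hset, h.2 i x]
  by_cases hx : c x = i <;> simp [chiS6, hx]

lemma s6_chi_sum {v m : ℕ} (c : Fin v → Fin (m+1)) (x : Fin v) :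
    ∑ i, chiS6 c i x = 1 := by
  simp [chiS6]

lemma s6_degree_identity {v m k : ℕ} (G : SimpleGraph (Fin v)) [DecidableRel G.Adj]
    (hreg : G.IsRegularOfDegree k)
    (c : Fin v → Fin (m+1)) (a b : ℕ) (h : IsIndubitable G c a b) (x : Fin v) :
    (k:ℝ) = ((a:ℝ) - b) + (m+1) * b := by
  have key : ∑ i, (G.adjMatrix ℝ *ᵥ chiS6 c i) x = (k:ℝ) := by
    simp only [adjMatrix_mulVec_apply]
    rw [Finset.sum_comm]
    have : ∀ u ∈ G.neighborFinset x, ∑ i, chiS6 c i u = 1 := fun u _ => s6_chi_sum c u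
    rw [Finset.sum_congr rfl this]
    simp [hreg x]
  rw [Finset.sum_congr rfl (fun i _ => s6_mulVec G c a b h i x)] at key
  rw [Finset.sum_add_distrib, ← Finset.mul_sum, s6_chi_sum c x] at key
  simp at key
  push_cast
  linarith

lemma s6_lam_ne_k {v m k : ℕ} (G : SimpleGraph (Fin v)) [DecidableRel G.Adj]
    (hconn : G.Connected) (hreg : G.IsRegularOfDegree k) (hm0 : 0 < m)
    (c : Fin v → Fin (m+1)) (a b : ℕ) (h : IsIndubitable G c a b)
    (lam : ℝ) (hab : (a:ℝ) - b = lam) : lam ≠ k := by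
  intro hk
  obtain ⟨x0, hx0⟩ := h.1 0
  have hdeg := s6_degree_identity G hreg c a b h x0
  rw [hab, ← hk] at hdeg
  have hb : (b:ℝ) = 0 := by
    have h1 : ((m:ℝ)+1) * b = 0 := by linarith
    have hm1 : ((m:ℝ)+1) ≠ 0 := by positivity
    exact (mul_eq_zero.mp h1).resolve_left hm1
  have hb0 : b = 0 := by exact_mod_cast hb
  have hadj : ∀ x y, G.Adj x y → c x = c y := by
    intro x y hxy
    by_contra hne
    have hcount := h.2 (c y) x
    rw [if_neg hne, hb0] at hcount
    have hyin : y ∈ {z : Fin v | G.Adj x z ∧ c z = c y} := ⟨hxy, rfl⟩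
    have hpos := (Set.ncard_pos (Set.toFinite _)).mpr ⟨y, hyin⟩
    omega
  have hconst : ∀ x y : Fin v, c x = c y := by
    intro x y
    obtain ⟨w⟩ := hconn x y
    induction w with
    | nil => rfl
    | cons hadj' p ih => exact (hadj _ _ hadj').trans ih
  obtain ⟨x1, hx1⟩ := h.1 1
  have h01 : (0 : Fin (m+1)) = 1 := by rw [← hx0, ← hx1]; exact hconst x0 x1
  have h01' : ((0:Fin (m+1)) : ℕ) = ((1:Fin (m+1)) : ℕ) := by rw [h01]
  rw [Fin.val_one'] at h01'
  simp at h01'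
  omega

lemma s6_w_mem_ker {v m k : ℕ} (G : SimpleGraph (Fin v)) [DecidableRel G.Adj]
    (hreg : G.IsRegularOfDegree k)
    (c : Fin v → Fin (m+1)) (a b : ℕ) (h : IsIndubitable G c a b)
    (lam : ℝ) (hab : (a:ℝ) - b = lam) (i : Fin (m+1)) :
    (((k:ℝ) - lam) • chiS6 c i - (b:ℝ) • (fun _ => (1:ℝ)) : Fin v → ℝ) ∈
      LinearMap.ker (Matrix.toLin' (lam • (1:Matrix (Fin v) (Fin v) ℝ) - G.adjMatrix ℝ)) := by
  set A := G.adjMatrix ℝ with hA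
  set L := Matrix.toLin' (lam • (1:Matrix (Fin v) (Fin v) ℝ) - A) with hL
  have hchi : L (chiS6 c i) = fun _ => -(b:ℝ) := by
    funext x
    have hAx := s6_mulVec G c a b h i x
    rw [hab] at hAx
    simp only [hL, toLin'_apply, Matrix.sub_mulVec, Matrix.smul_mulVec,
      Matrix.one_mulVec, Pi.sub_apply, Pi.smul_apply, smul_eq_mul]
    rw [hAx]; ring
  have hones : L (fun _ => (1:ℝ)) = fun _ => lam - k := by
    funext x
    simp only [hL, toLin'_apply, Matrix.sub_mulVec, Matrix.smul_mulVec,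
      Matrix.one_mulVec, Pi.sub_apply, Pi.smul_apply, smul_eq_mul]
    rw [hA, adjMatrix_mulVec_apply]
    simp [hreg x]
  rw [LinearMap.mem_ker, map_sub, L.map_smul, L.map_smul, hchi, hones]
  funext x
  simp
  ring

lemma s6_chi_li {v m : ℕ} (c : Fin v → Fin (m+1)) (hc : Function.Surjective c) :
    LinearIndependent ℝ (chiS6 c) := by
  rw [Fintype.linearIndependent_iff]
  intro g hg i
  obtain ⟨x, hx⟩ := hc i
  have h := congrFun hg x
  simpa [chiS6, hx] using h

lemma s6_span_char {v m : ℕ} (c : Fin v → Fin (m+1)) (x y : Fin v) :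
    c x = c y ↔ ∀ f ∈ Submodule.span ℝ (Set.range (chiS6 c)), f x = f y := by
  constructor
  · intro hxy f hf
    induction hf using Submodule.span_induction with
    | mem f hf => obtain ⟨i, rfl⟩ := hf; simp [chiS6, hxy]
    | zero => rfl
    | add f g _ _ hf hg => simp [hf, hg]
    | smul r f _ hf => simp [hf]
  · intro hf
    by_contra hne
    have h := hf (chiS6 c (c x)) (Submodule.subset_span ⟨c x, rfl⟩)
    rw [show chiS6 c (c x) x = 1 from if_pos rfl,
        show chiS6 c (c x) y = 0 from if_neg (fun hh => hne hh.symm)] at h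
    exact one_ne_zero h

lemma s6_span_eq {v m k : ℕ} (G : SimpleGraph (Fin v)) [DecidableRel G.Adj]
    (hreg : G.IsRegularOfDegree k) (lam : ℝ)
    (hm : eigMult (G.adjMatrix ℝ) lam = m) (hlamk : lam ≠ k) (x0 : Fin v)
    (c : Fin v → Fin (m+1)) (a b : ℕ) (h : IsIndubitable G c a b)
    (hab : (a:ℝ) - b = lam) :
    Submodule.span ℝ (Set.range (chiS6 c)) =
      LinearMap.ker (Matrix.toLin' (lam • (1:Matrix (Fin v) (Fin v) ℝ) - G.adjMatrix ℝ)) ⊔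
        Submodule.span ℝ {(fun _ => (1:ℝ) : Fin v → ℝ)} := by
  set K := LinearMap.ker (Matrix.toLin' (lam • (1:Matrix (Fin v) (Fin v) ℝ) - G.adjMatrix ℝ))
    with hK
  set O : Submodule ℝ (Fin v → ℝ) := Submodule.span ℝ {(fun _ => (1:ℝ) : Fin v → ℝ)} with hO
  have hk0 : ((k:ℝ) - lam) ≠ 0 := sub_ne_zero.mpr (fun hh => hlamk hh.symm)
  have hle : Submodule.span ℝ (Set.range (chiS6 c)) ≤ K ⊔ O := by
    rw [Submodule.span_le]
    rintro _ ⟨i, rfl⟩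
    have hw : (((k:ℝ) - lam) • chiS6 c i - (b:ℝ) • (fun _ => (1:ℝ)) : Fin v → ℝ) ∈ K ⊔ O :=
      Submodule.mem_sup_left (s6_w_mem_ker G hreg c a b h lam hab i)
    have hones : ((fun _ => (1:ℝ)) : Fin v → ℝ) ∈ K ⊔ O :=
      Submodule.mem_sup_right (Submodule.mem_span_singleton_self _)
    have hsm : ((k:ℝ) - lam) • chiS6 c i ∈ K ⊔ O := by
      have := Submodule.add_mem _ hw (Submodule.smul_mem _ (b:ℝ) hones)
      simpa using this
    have := Submodule.smul_mem _ ((k:ℝ) - lam)⁻¹ hsm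
    rwa [smul_smul, inv_mul_cancel₀ hk0, one_smul] at this
  have hfr1 : Module.finrank ℝ (Submodule.span ℝ (Set.range (chiS6 c))) = m + 1 := by
    rw [finrank_span_eq_card (s6_chi_li c h.1), Fintype.card_fin]
  have hfrK : Module.finrank ℝ K = m := hm
  have hfrO : Module.finrank ℝ O = 1 := by
    apply finrank_span_singleton
    intro hzero
    have := congrFun hzero x0
    simpa using this
  have hfrKO : Module.finrank ℝ (K ⊔ O : Submodule ℝ (Fin v → ℝ)) ≤ m + 1 := by
    have hsum := Submodule.finrank_sup_add_finrank_inf_eq K O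
    omega
  exact Submodule.eq_of_le_of_finrank_le hle (by omega)

/-- A connected regular graph has at most one full indubitable partition
corresponding to a given eigenvalue `λ` (of multiplicity `m`): if the colorings `c` and `c'`
both describe full indubitable partitions corresponding to `λ`, then they induce the same
partition of the vertex set. -/
theorem statement6 (v k m : ℕ) (G : SimpleGraph (Fin v)) [DecidableRel G.Adj]
    (hconn : G.Connected) (hreg : G.IsRegularOfDegree k)
    (lam : ℝ) (hm : eigMult (G.adjMatrix ℝ) lam = m) (hm0 : 0 < m)
    (c c' : Fin v → Fin (m + 1)) (a b a' b' : ℕ)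
    (h1 : IsIndubitable G c a b) (h2 : IsIndubitable G c' a' b')
    (hab : (a : ℝ) - (b : ℝ) = lam) (hab' : (a' : ℝ) - (b' : ℝ) = lam) :
    ∀ x y : Fin v, c x = c y ↔ c' x = c' y := by
  intro x y
  have hlamk : lam ≠ (k:ℝ) := s6_lam_ne_k G hconn hreg hm0 c a b h1 lam hab
  rw [s6_span_char c x y, s6_span_char c' x y,
    s6_span_eq G hreg lam hm hlamk x c a b h1 hab,
    s6_span_eq G hreg lam hm hlamk x c' a' b' h2 hab']
end

section
/- Let Γ be a connected k-regular graph that has an indubitable partition with parameters (a,b) and r+1 cells, where r ≥ 1. Then k = a + r·b, and a − b is an eigenvalue of the adjacency matrix of Γ. -/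
open Matrix Finset Kronecker SimpleGraph

/-- If a connected `k`-regular graph has an indubitable partition with
parameters `(a,b)` and `r+1` cells, `r ≥ 1`, then `k = a + r·b`, and `a − b` is an eigenvalue
of the adjacency matrix. -/
theorem statement7 (v k a b r : ℕ) (hr : 1 ≤ r) (G : SimpleGraph (Fin v)) [DecidableRel G.Adj]
    (hconn : G.Connected) (hreg : G.IsRegularOfDegree k)
    (c : Fin v → Fin (r + 1)) (hind : IsIndubitable G c a b) :
    k = a + r * b ∧ 0 < eigMult (G.adjMatrix ℝ) ((a : ℝ) - (b : ℝ)) := by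

  classical
  obtain ⟨hsurj, hcount⟩ := hind
  -- counting in Finset form
  have key : ∀ (i : Fin (r+1)) (x : Fin v),
      (Finset.univ.filter fun y => G.Adj x y ∧ c y = i).card = if c x = i then a else b := by
    intro i x
    have := hcount i x
    rw [show {y : Fin v | G.Adj x y ∧ c y = i}
        = ↑(Finset.univ.filter fun y => G.Adj x y ∧ c y = i) by
          ext y; simp, Set.ncard_coe_finset] at this
    convert this
  -- pick vertices in cells 0 and 1
  obtain ⟨x0, hx0⟩ := hsurj 0
  -- Part 1
  have hzero_ne_one : (0 : Fin (r+1)) ≠ 1 := by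
    have : (1:ℕ) < r + 1 := Nat.lt_succ_of_le hr
    simp [Fin.ext_iff, Nat.mod_eq_of_lt this]
  have hk : k = a + r * b := by
    have hdeg := hreg x0
    have hsum : ∑ i : Fin (r+1), (Finset.univ.filter fun y => G.Adj x0 y ∧ c y = i).card
        = (Finset.univ.filter fun y => G.Adj x0 y).card := by
      rw [Finset.card_eq_sum_card_fiberwise (f := c)
        (t := (Finset.univ : Finset (Fin (r+1)))) (fun x _ => Finset.mem_univ _)]
      apply Finset.sum_congr rfl
      intro i _
      congr 1
      ext y
      simp [Finset.mem_filter, and_assoc]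
    have hdeg' : (Finset.univ.filter fun y => G.Adj x0 y).card = k := by
      rw [← hdeg, SimpleGraph.degree]
      congr 1
      ext y
      simp [SimpleGraph.mem_neighborFinset]
    rw [hdeg'] at hsum
    have hsum2 : ∑ i : Fin (r+1), (Finset.univ.filter fun y => G.Adj x0 y ∧ c y = i).card
        = a + r * b := by
      have : ∀ i : Fin (r+1),
          (Finset.univ.filter fun y => G.Adj x0 y ∧ c y = i).card
          = if c x0 = i then a else b := fun i => key i x0
      rw [Finset.sum_congr rfl (fun i _ => this i)]
      rw [← Finset.add_sum_erase Finset.univ _ (Finset.mem_univ (c x0))]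
      simp only [if_pos rfl]
      congr 1
      rw [Finset.sum_congr rfl (fun i hi => if_neg (by
        intro h; exact (Finset.mem_erase.mp hi).1 h.symm)),
        Finset.sum_const, Finset.card_erase_of_mem (Finset.mem_univ _)]
      simp [mul_comm]
    omega
  refine ⟨hk, ?_⟩
  -- Part 2: eigenvector
  set A := G.adjMatrix ℝ with hA
  set w : Fin v → ℝ := fun y => if c y = 0 then 1 else if c y = 1 then -1 else 0 with hw
  have hAw : A *ᵥ w = ((a:ℝ) - b) • w := by
    funext x
    have hm : ∀ i : Fin (r+1),
        ∑ y ∈ Finset.univ.filter (fun y => G.Adj x y ∧ c y = i), (1:ℝ)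
        = if c x = i then (a:ℝ) else b := by
      intro i
      rw [Finset.sum_const, key i x]
      split <;> simp
    have hsum0 := hm 0
    have hsum1 := hm 1
    have expand : (A *ᵥ w) x =
        (∑ y ∈ Finset.univ.filter (fun y => G.Adj x y ∧ c y = 0), (1:ℝ))
        - ∑ y ∈ Finset.univ.filter (fun y => G.Adj x y ∧ c y = 1), (1:ℝ) := by
      simp only [hA, SimpleGraph.adjMatrix_mulVec_apply]
      rw [show (Finset.filter (fun y => G.Adj x y ∧ c y = 0) Finset.univ)
          = (Finset.filter (fun y => c y = 0) (G.neighborFinset x)) by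
            ext y; simp [SimpleGraph.mem_neighborFinset, and_comm]]
      rw [show (Finset.filter (fun y => G.Adj x y ∧ c y = 1) Finset.univ)
          = (Finset.filter (fun y => c y = 1) (G.neighborFinset x)) by
            ext y; simp [SimpleGraph.mem_neighborFinset, and_comm]]
      rw [Finset.sum_filter, Finset.sum_filter, ← Finset.sum_sub_distrib]
      apply Finset.sum_congr rfl
      intro y _
      simp only [hw]
      by_cases h0 : c y = 0
      · rw [if_pos h0, if_pos h0, if_neg (fun h => hzero_ne_one (h0.symm.trans h))]
        norm_num
      · rw [if_neg h0, if_neg h0]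
        by_cases h1 : c y = 1
        · rw [if_pos h1, if_pos h1]; norm_num
        · rw [if_neg h1, if_neg h1]; norm_num
    rw [expand, hsum0, hsum1]
    simp only [Pi.smul_apply, hw, smul_eq_mul]
    by_cases h0 : c x = 0
    · rw [if_pos h0, if_neg (fun h => hzero_ne_one (h0.symm.trans h)), if_pos h0]
      ring
    · by_cases h1 : c x = 1
      · rw [if_neg h0, if_pos h1, if_neg h0, if_pos h1]; ring
      · rw [if_neg h0, if_neg h1, if_neg h0, if_neg h1]; ring
  have hmem : w ∈ LinearMap.ker (Matrix.toLin'
      (((a:ℝ) - b) • (1 : Matrix (Fin v) (Fin v) ℝ) - A)) := by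
    rw [LinearMap.mem_ker, Matrix.toLin'_apply, Matrix.sub_mulVec, Matrix.smul_mulVec,
      Matrix.one_mulVec, hAw]
    simp
  have hwne : w ≠ 0 := by
    intro h
    have := congrFun h x0
    simp only [hw, hx0, if_pos rfl, Pi.zero_apply] at this
    exact one_ne_zero this
  rw [eigMult, Module.finrank_pos_iff]
  exact nontrivial_of_ne ⟨w, hmem⟩ 0 (by simp [Subtype.ext_iff, hwne])
end

section
/- Let Γ be a connected k-regular graph with a simple eigenvalue λ ≠ k (i.e., λ has multiplicity 1) and corresponding spectral idempotent E_λ. Then Γ has a full indubitable partition corresponding to λ if and only if all diagonal entries of E_λ are equal. -/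
open Matrix Finset Kronecker SimpleGraph

namespace Statement9Aux

open Matrix

variable {v : ℕ}

lemma mem_ker_iff {A : Matrix (Fin v) (Fin v) ℝ} {lam : ℝ} {w : Fin v → ℝ} :
    w ∈ LinearMap.ker (Matrix.toLin' (lam • (1 : Matrix (Fin v) (Fin v) ℝ) - A)) ↔
      A *ᵥ w = lam • w := by
  rw [LinearMap.mem_ker, Matrix.toLin'_apply, Matrix.sub_mulVec, Matrix.smul_mulVec,
    Matrix.one_mulVec, sub_eq_zero, eq_comm]

lemma ker_eq_span {A : Matrix (Fin v) (Fin v) ℝ} {lam : ℝ}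
    (hm : eigMult A lam = 1) {w : Fin v → ℝ} (hw : A *ᵥ w = lam • w) (hw0 : w ≠ 0) :
    LinearMap.ker (Matrix.toLin' (lam • (1 : Matrix (Fin v) (Fin v) ℝ) - A))
      = Submodule.span ℝ {w} := by
  refine (Submodule.eq_of_le_of_finrank_eq ?_ ?_).symm
  · rw [Submodule.span_le, Set.singleton_subset_iff]
    exact mem_ker_iff.mpr hw
  · rw [finrank_span_singleton hw0]
    exact hm.symm

lemma col_eigen {A E : Matrix (Fin v) (Fin v) ℝ} {lam : ℝ}
    (hAE : A * E = lam • E) (j : Fin v) :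
    A *ᵥ (fun i => E i j) = lam • (fun i => E i j) := by
  have h1 : (fun i => E i j) = E *ᵥ Pi.single j 1 := by
    funext i; simp
  rw [h1, Matrix.mulVec_mulVec, hAE, Matrix.smul_mulVec]

/-- columns of `E` are scalar multiples of a spanning eigenvector -/
lemma col_smul {A E : Matrix (Fin v) (Fin v) ℝ} {lam : ℝ}
    (hm : eigMult A lam = 1) (hAE : A * E = lam • E)
    {w : Fin v → ℝ} (hw : A *ᵥ w = lam • w) (hw0 : w ≠ 0) :
    ∃ t : Fin v → ℝ, ∀ j i, E i j = t j * w i := by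
  have hker := ker_eq_span hm hw hw0
  have hcol : ∀ j : Fin v, ∃ c : ℝ, ∀ i, E i j = c * w i := by
    intro j
    have hmem : (fun i => E i j) ∈
        LinearMap.ker (Matrix.toLin' (lam • (1 : Matrix (Fin v) (Fin v) ℝ) - A)) :=
      mem_ker_iff.mpr (col_eigen hAE j)
    rw [hker] at hmem
    obtain ⟨c, hc⟩ := Submodule.mem_span_singleton.mp hmem
    exact ⟨c, fun i => by have := congrFun hc i; simpa using this.symm⟩
  choose t ht using hcol
  exact ⟨t, ht⟩

lemma sum_eigvec_eq_zero {k : ℕ} {G : SimpleGraph (Fin v)} [DecidableRel G.Adj]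
    (hreg : G.IsRegularOfDegree k) {lam : ℝ} (hlam : lam ≠ (k : ℝ))
    {u : Fin v → ℝ} (hu : G.adjMatrix ℝ *ᵥ u = lam • u) :
    ∑ x, u x = 0 := by
  have h2 : (fun _ => (1 : ℝ)) ᵥ* G.adjMatrix ℝ = fun _ => (k : ℝ) := by
    funext y
    rw [SimpleGraph.adjMatrix_vecMul_apply, Finset.sum_const, nsmul_eq_mul, mul_one,
      SimpleGraph.card_neighborFinset_eq_degree, hreg y]
  have h3 : dotProduct (fun _ => (1 : ℝ)) (G.adjMatrix ℝ *ᵥ u)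
      = dotProduct ((fun _ => (1 : ℝ)) ᵥ* G.adjMatrix ℝ) u := (Matrix.dotProduct_mulVec _ _ _)
  rw [hu, h2] at h3
  simp only [dotProduct, Pi.smul_apply, smul_eq_mul, one_mul] at h3
  rw [← Finset.mul_sum, ← Finset.mul_sum] at h3
  have h4 : (lam - (k : ℝ)) * ∑ x, u x = 0 := by ring_nf; linarith [h3]
  rcases mul_eq_zero.mp h4 with h | h
  · exact absurd (sub_eq_zero.mp h) hlam
  · exact h

lemma ncard_eq_card_filter (p : Fin v → Prop) [DecidablePred p] :
    {y : Fin v | p y}.ncard = (Finset.univ.filter p).card := by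
  rw [Set.ncard_eq_toFinset_card', Set.toFinset_setOf]

lemma fin2_cases (t : Fin 2) : t = 0 ∨ t = 1 := by fin_cases t <;> simp

lemma fin2_ne_zero {t : Fin 2} : ¬ t = 0 ↔ t = 1 := by fin_cases t <;> simp

end Statement9Aux


/-- Proposition eL. Let `Γ` be a connected `k`-regular graph with a simple
eigenvalue `λ ≠ k` and spectral idempotent `E_λ`. Then `Γ` has a full indubitable partition
corresponding to `λ` if and only if `E_λ` has constant diagonal. -/
theorem statement9 (v k : ℕ) (G : SimpleGraph (Fin v)) [DecidableRel G.Adj]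
    (hconn : G.Connected) (hreg : G.IsRegularOfDegree k)
    (lam : ℝ) (hlam : lam ≠ (k : ℝ)) (hm : eigMult (G.adjMatrix ℝ) lam = 1)
    (E : Matrix (Fin v) (Fin v) ℝ) (hE : IsSpectralIdempotent (G.adjMatrix ℝ) E lam) :
    HasFullIndubitable G lam 1 ↔ ∀ i j : Fin v, E i i = E j j := by
  classical
  obtain ⟨hsym, hidem, hAE, hrank⟩ := hE
  haveI hne : Nonempty (Fin v) := hconn.nonempty
  have hsymE : ∀ p q : Fin v, E p q = E q p := fun p q => (congrFun (congrFun hsym p) q).symm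
  constructor
  · -- forward: partition implies constant diagonal
    rintro ⟨c, a, b, ⟨hsurj, hcnt⟩, hab⟩ i j
    set w : Fin v → ℝ := fun y => if c y = 0 then 1 else -1 with hwdef
    have hwsq : ∀ y, w y * w y = 1 := by
      intro y; by_cases h : c y = 0 <;> simp [hwdef, h]
    have hw0 : w ≠ 0 := by
      intro h
      obtain ⟨x⟩ := hne
      have := congrFun h x
      have h1 := hwsq x
      rw [this] at h1
      norm_num at h1
    have hcnt' : ∀ (i : Fin 2) (x : Fin v),
        ((Finset.univ.filter (fun y => G.Adj x y ∧ c y = i)).card : ℝ)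
          = if c x = i then (a : ℝ) else (b : ℝ) := by
      intro i x
      have := hcnt i x
      rw [Statement9Aux.ncard_eq_card_filter (fun y => G.Adj x y ∧ c y = i)] at this
      rw [this]
      split <;> simp
    have hAw : G.adjMatrix ℝ *ᵥ w = lam • w := by
      funext x
      rw [SimpleGraph.adjMatrix_mulVec_apply]
      have hsplit : ∑ y ∈ G.neighborFinset x, w y
          = ∑ y ∈ (G.neighborFinset x).filter (fun y => c y = 0), w y
            + ∑ y ∈ (G.neighborFinset x).filter (fun y => ¬ c y = 0), w y :=
        (Finset.sum_filter_add_sum_filter_not _ _ _).symm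
      have hf0 : (G.neighborFinset x).filter (fun y => c y = 0)
          = Finset.univ.filter (fun y => G.Adj x y ∧ c y = 0) := by
        rw [SimpleGraph.neighborFinset_eq_filter, Finset.filter_filter]
      have hf1 : (G.neighborFinset x).filter (fun y => ¬ c y = 0)
          = Finset.univ.filter (fun y => G.Adj x y ∧ c y = 1) := by
        rw [SimpleGraph.neighborFinset_eq_filter, Finset.filter_filter]
        congr 1
        funext y
        simp [Statement9Aux.fin2_ne_zero]
      have hs0 : ∑ y ∈ (G.neighborFinset x).filter (fun y => c y = 0), w y
          = ((Finset.univ.filter (fun y => G.Adj x y ∧ c y = 0)).card : ℝ) := by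
        rw [hf0, Finset.sum_congr rfl (fun y hy => ?_), Finset.sum_const, nsmul_eq_mul, mul_one]
        have : c y = 0 := (Finset.mem_filter.mp hy).2.2
        simp [hwdef, this]
      have hs1 : ∑ y ∈ (G.neighborFinset x).filter (fun y => ¬ c y = 0), w y
          = -((Finset.univ.filter (fun y => G.Adj x y ∧ c y = 1)).card : ℝ) := by
        rw [hf1, Finset.sum_congr rfl (fun y hy => ?_), Finset.sum_const, nsmul_eq_mul, mul_neg_one]
        have h1 : c y = 1 := (Finset.mem_filter.mp hy).2.2
        have : ¬ c y = 0 := by rw [h1]; decide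
        simp [hwdef, this]
      rw [hsplit, hs0, hs1, hcnt' 0 x, hcnt' 1 x]
      simp only [Pi.smul_apply, smul_eq_mul, hwdef]
      rcases Statement9Aux.fin2_cases (c x) with h | h
      · have h' : ¬ c x = 1 := by rw [h]; decide
        rw [if_pos h, if_neg h', if_pos h]
        linarith [hab]
      · have h' : ¬ c x = 0 := by rw [h]; decide
        rw [if_neg h', if_pos h, if_neg h']
        linarith [hab]
    obtain ⟨t, ht⟩ := Statement9Aux.col_smul hm hAE hAw hw0
    have hsymij : t j * w i = t i * w j := by
      have h1 : E i j = E j i := hsymE i j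
      rw [ht j i, ht i j] at h1
      exact h1
    rw [ht i i, ht j j]
    have hsq_i := hwsq i
    have hsq_j := hwsq j
    linear_combination (-(w i * w j)) * hsymij + (t j * w j) * hsq_i - (t i * w i) * hsq_j
  · -- reverse: constant diagonal implies partition
    intro hd
    have hE1 : E.rank = 1 := by rw [hrank, hm]
    have hEne : E ≠ 0 := by
      intro h
      rw [h, Matrix.rank_zero] at hE1
      exact one_ne_zero hE1.symm
    -- diagonal entries are positive
    have hdiag_sq : ∀ x, E x x = ∑ m, E x m * E x m := by
      intro x
      conv_lhs => rw [← hidem]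
      rw [Matrix.mul_apply]
      refine Finset.sum_congr rfl fun m _ => ?_
      rw [hsymE m x]
    have hdiag_pos : ∀ x, 0 < E x x := by
      intro x
      rcases lt_or_eq_of_le (by rw [hdiag_sq x]; exact Finset.sum_nonneg fun m _ => mul_self_nonneg _ : (0:ℝ) ≤ E x x) with h | h
      · exact h
      · exfalso
        apply hEne
        ext i m
        have hdz : E i i = 0 := by rw [hd i x, ← h]
        have : ∑ m, E i m * E i m = 0 := by rw [← hdiag_sq i, hdz]
        have := (Finset.sum_eq_zero_iff_of_nonneg (fun m _ => mul_self_nonneg (E i m))).mp this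
          m (Finset.mem_univ m)
        simpa [mul_self_eq_zero] using this
    obtain ⟨i0⟩ := hne
    set d : ℝ := E i0 i0 with hddef
    have hd0 : d ≠ 0 := ne_of_gt (hdiag_pos i0)
    set u : Fin v → ℝ := fun i => E i i0 with hudef
    have hu0 : u ≠ 0 := by
      intro h
      have := congrFun h i0
      exact hd0 this
    have hAu : G.adjMatrix ℝ *ᵥ u = lam • u := Statement9Aux.col_eigen hAE i0
    obtain ⟨t, ht⟩ := Statement9Aux.col_smul hm hAE hAu hu0
    have htu : ∀ x, t x * u x = d := by
      intro x
      have := ht x x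
      rw [← this, hd x i0]
    have hune : ∀ x, u x ≠ 0 := by
      intro x hx
      apply hd0
      rw [← htu x, hx, mul_zero]
    have husq : ∀ x y, u x * u x = u y * u y := by
      intro x y
      apply mul_left_cancel₀ hd0
      have h1 : t x * u y = t y * u x := by
        have hxy : E y x = E x y := hsymE y x
        rw [ht x y, ht y x] at hxy
        exact hxy
      have h2 := htu x
      have h3 := htu y
      linear_combination (-(u x * u y)) * h1 + (u y * u y) * h2 - (u x * u x) * h3
    have hsum : ∑ x, u x = 0 := Statement9Aux.sum_eigvec_eq_zero hreg hlam hAu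
    set c : Fin v → Fin 2 := fun x => if 0 < u x then 0 else 1 with hcdef
    have hcpos : ∀ x, c x = 0 ↔ 0 < u x := by
      intro x
      constructor
      · intro h
        by_contra h'
        simp [hcdef, h'] at h
      · intro h; simp [hcdef, h]
    have hcneg : ∀ x, c x = 1 ↔ u x < 0 := by
      intro x
      rcases lt_trichotomy (u x) 0 with h | h | h
      · constructor
        · intro _; exact h
        · intro _; simp [hcdef, not_lt.mpr (le_of_lt h)]
      · exact absurd h (hune x)
      · constructor
        · intro hc
          exfalso
          simp [hcdef, h] at hc
        · intro h'; linarith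
    -- existence of positive and negative entries
    have hexpos : ∃ x, 0 < u x := by
      by_contra h
      push_neg at h
      have hneg : ∀ x, u x < 0 := fun x => lt_of_le_of_ne (h x) (hune x)
      have : ∑ x, u x < 0 := by
        have := Finset.sum_lt_sum_of_nonempty ⟨i0, Finset.mem_univ i0⟩ (fun x _ => hneg x)
        simpa using this
      linarith [hsum, this]
    have hexneg : ∃ x, u x < 0 := by
      by_contra h
      push_neg at h
      have hpos : ∀ x, 0 < u x := fun x => lt_of_le_of_ne (h x) (Ne.symm (hune x))
      have : 0 < ∑ x, u x := by
        have := Finset.sum_lt_sum_of_nonempty ⟨i0, Finset.mem_univ i0⟩ (fun x _ => hpos x)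
        simpa using this
      linarith [hsum, this]
    obtain ⟨xp, hxp⟩ := hexpos
    set s : ℝ := u xp with hsdef
    have hs_pos : 0 < s := hxp
    have huval : ∀ x, u x = s ∨ u x = -s := by
      intro x
      have h := husq x xp
      have : (u x - s) * (u x + s) = 0 := by rw [hsdef]; linear_combination h
      rcases mul_eq_zero.mp this with h' | h'
      · left; linarith [sub_eq_zero.mp h']
      · right; linarith [eq_neg_of_add_eq_zero_left h']
    have huc : ∀ x, u x = if c x = 0 then s else -s := by
      intro x
      rcases huval x with h | h
      · rw [h, if_pos ((hcpos x).mpr (h ▸ hs_pos))]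
      · have hneg : u x < 0 := by rw [h]; linarith
        have : ¬ c x = 0 := by
          intro hc
          have := (hcpos x).mp hc
          linarith
        rw [h, if_neg this]
    -- counting
    set n0 : Fin v → ℕ := fun x => (Finset.univ.filter (fun y => G.Adj x y ∧ c y = 0)).card
      with hn0def
    set n1 : Fin v → ℕ := fun x => (Finset.univ.filter (fun y => G.Adj x y ∧ c y = 1)).card
      with hn1def
    have hnsum : ∀ x, n0 x + n1 x = k := by
      intro x
      have hf0 : (G.neighborFinset x).filter (fun y => c y = 0)
          = Finset.univ.filter (fun y => G.Adj x y ∧ c y = 0) := by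
        rw [SimpleGraph.neighborFinset_eq_filter, Finset.filter_filter]
      have hf1 : (G.neighborFinset x).filter (fun y => ¬ c y = 0)
          = Finset.univ.filter (fun y => G.Adj x y ∧ c y = 1) := by
        rw [SimpleGraph.neighborFinset_eq_filter, Finset.filter_filter]
        congr 1
        funext y
        simp [Statement9Aux.fin2_ne_zero]
      have key : (Finset.filter (fun y => c y = 0) (G.neighborFinset x)).card
          + (Finset.filter (fun y => ¬ c y = 0) (G.neighborFinset x)).card
          = (G.neighborFinset x).card :=
        Finset.card_filter_add_card_filter_not _
      rw [hf0, hf1, SimpleGraph.card_neighborFinset_eq_degree, hreg x] at key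
      exact key
    have heig : ∀ x, (n0 x : ℝ) * s - (n1 x : ℝ) * s = lam * u x := by
      intro x
      have hx := congrFun hAu x
      rw [SimpleGraph.adjMatrix_mulVec_apply] at hx
      have hsplit : ∑ y ∈ G.neighborFinset x, u y
          = ∑ y ∈ (G.neighborFinset x).filter (fun y => c y = 0), u y
            + ∑ y ∈ (G.neighborFinset x).filter (fun y => ¬ c y = 0), u y :=
        (Finset.sum_filter_add_sum_filter_not _ _ _).symm
      have hf0 : (G.neighborFinset x).filter (fun y => c y = 0)
          = Finset.univ.filter (fun y => G.Adj x y ∧ c y = 0) := by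
        rw [SimpleGraph.neighborFinset_eq_filter, Finset.filter_filter]
      have hf1 : (G.neighborFinset x).filter (fun y => ¬ c y = 0)
          = Finset.univ.filter (fun y => G.Adj x y ∧ c y = 1) := by
        rw [SimpleGraph.neighborFinset_eq_filter, Finset.filter_filter]
        congr 1
        funext y
        simp [Statement9Aux.fin2_ne_zero]
      have hs0 : ∑ y ∈ (G.neighborFinset x).filter (fun y => c y = 0), u y
          = (n0 x : ℝ) * s := by
        rw [hf0, Finset.sum_congr rfl (fun y hy => ?_), Finset.sum_const, nsmul_eq_mul, hn0def]
        have hy0 : c y = 0 := (Finset.mem_filter.mp hy).2.2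
        rw [huc y, if_pos hy0]
      have hs1 : ∑ y ∈ (G.neighborFinset x).filter (fun y => ¬ c y = 0), u y
          = -((n1 x : ℝ) * s) := by
        rw [hf1, Finset.sum_congr rfl (fun y hy => ?_), Finset.sum_const, nsmul_eq_mul, hn1def]
        · rw [mul_neg]
        · have hy1 : c y = 1 := (Finset.mem_filter.mp hy).2.2
          have hy0 : ¬ c y = 0 := by omega
          rw [huc y, if_neg hy0]
      rw [hsplit, hs0, hs1] at hx
      simp only [Pi.smul_apply, smul_eq_mul] at hx
      linarith [hx]
    obtain ⟨xn, hxn⟩ := hexneg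
    have hab : (n0 xp : ℝ) - (n1 xp : ℝ) = lam := by
      have h1 := heig xp
      have hup : u xp = s := rfl
      rw [hup] at h1
      have hs_ne : s ≠ 0 := ne_of_gt hs_pos
      have : ((n0 xp : ℝ) - (n1 xp : ℝ)) * s = lam * s := by linarith [h1]
      exact mul_right_cancel₀ hs_ne this
    refine ⟨c, n0 xp, n1 xp, ⟨⟨?_, ?_⟩, hab⟩⟩
    · -- surjectivity
      intro i
      rcases Statement9Aux.fin2_cases i with h | h
      · exact ⟨xp, by rw [h]; exact (hcpos xp).mpr hxp⟩
      · exact ⟨xn, by rw [h]; exact (hcneg xn).mpr hxn⟩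
    · -- counts
      have hmain : ∀ x, (n0 x = if c x = 0 then n0 xp else n1 xp)
          ∧ (n1 x = if c x = 0 then n1 xp else n0 xp) := by
        intro x
        rcases Statement9Aux.fin2_cases (c x) with h | h
        · have hux : u x = s := by rw [huc x, if_pos h]
          have h1 := heig x
          rw [hux] at h1
          have hs_ne : s ≠ 0 := ne_of_gt hs_pos
          have h2 : (n0 x : ℝ) - (n1 x : ℝ) = lam := by
            have : ((n0 x : ℝ) - (n1 x : ℝ)) * s = lam * s := by linarith [h1]
            exact mul_right_cancel₀ hs_ne this
          have h3 : (n0 x : ℝ) - (n1 x : ℝ) = (n0 xp : ℝ) - (n1 xp : ℝ) := by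
            rw [h2, hab]
          have h4 : n0 x + n1 x = n0 xp + n1 xp := by rw [hnsum x, hnsum xp]
          have h5 : n0 x = n0 xp ∧ n1 x = n1 xp := by
            have h6 : (n0 x : ℝ) + (n1 x : ℝ) = (n0 xp : ℝ) + (n1 xp : ℝ) := by
              exact_mod_cast h4
            constructor
            · exact_mod_cast (by linarith : (n0 x : ℝ) = n0 xp)
            · exact_mod_cast (by linarith : (n1 x : ℝ) = n1 xp)
          rw [if_pos h, if_pos h]
          exact h5
        · have h0 : ¬ c x = 0 := by rw [h]; decide
          have hux : u x = -s := by rw [huc x, if_neg h0]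
          have h1 := heig x
          rw [hux] at h1
          have hs_ne : s ≠ 0 := ne_of_gt hs_pos
          have h2 : (n0 x : ℝ) - (n1 x : ℝ) = -lam := by
            have : ((n0 x : ℝ) - (n1 x : ℝ)) * s = -lam * s := by linarith [h1]
            exact mul_right_cancel₀ hs_ne this
          have h3 : (n0 x : ℝ) - (n1 x : ℝ) = (n1 xp : ℝ) - (n0 xp : ℝ) := by
            rw [h2, ← hab]; ring
          have h4 : n0 x + n1 x = n0 xp + n1 xp := by rw [hnsum x, hnsum xp]
          have h5 : n0 x = n1 xp ∧ n1 x = n0 xp := by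
            have h6 : (n0 x : ℝ) + (n1 x : ℝ) = (n0 xp : ℝ) + (n1 xp : ℝ) := by
              exact_mod_cast h4
            constructor
            · exact_mod_cast (by linarith : (n0 x : ℝ) = n1 xp)
            · exact_mod_cast (by linarith : (n1 x : ℝ) = n0 xp)
          rw [if_neg h0, if_neg h0]
          exact h5
      intro i x
      rw [Statement9Aux.ncard_eq_card_filter (fun y => G.Adj x y ∧ c y = i)]
      rcases Statement9Aux.fin2_cases i with hi | hi
      · subst hi
        rcases Statement9Aux.fin2_cases (c x) with h | h
        · rw [if_pos h]
          have h2 := (hmain x).1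
          rw [if_pos h] at h2
          exact h2
        · have h' : ¬ c x = 0 := by rw [h]; decide
          rw [if_neg h']
          have h2 := (hmain x).1
          rw [if_neg h'] at h2
          exact h2
      · subst hi
        rcases Statement9Aux.fin2_cases (c x) with h | h
        · have h' : ¬ c x = 1 := by rw [h]; decide
          rw [if_neg h']
          have h2 := (hmain x).2
          rw [if_pos h] at h2
          exact h2
        · have h' : ¬ c x = 0 := by rw [h]; decide
          rw [if_pos h]
          have h2 := (hmain x).2
          rw [if_neg h'] at h2
          exact h2
end

section
/- Let C be the adjacency matrix of a connected ℓ-regular graph on m vertices with ℓ > 1, and let Γ be the graph with adjacency matrix A = I_{m+1} ⊗ C + (J_{m+1} − I_{m+1}) ⊗ I_m, i.e., the Cartesian product of the graph of C and the complete graph K_{m+1}. If m+1 > 2ℓ, then λ = ℓ−1 is an eigenvalue of Γ with multiplicity exactly m, and the partition of the vertex set into the m+1 copies of the graph of C is a full indubitable partition with parameters (ℓ,1) corresponding to λ. -/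
open Matrix Finset Kronecker SimpleGraph

lemma aux_bound {n : ℕ} (H : SimpleGraph (Fin n)) [DecidableRel H.Adj] {l : ℕ}
    (hreg : H.IsRegularOfDegree l) (g : Fin n → ℝ) (μ : ℝ) (hμ : (l : ℝ) < |μ|)
    (heig : ∀ x, μ * g x = ∑ y ∈ H.neighborFinset x, g y) : g = 0 := by
  funext x
  obtain ⟨x0, -, hx0⟩ := Finset.exists_max_image Finset.univ (fun z => |g z|)
    ⟨x, Finset.mem_univ x⟩
  have key : |μ| * |g x0| ≤ (l : ℝ) * |g x0| := by
    rw [← abs_mul, heig x0]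
    calc |∑ y ∈ H.neighborFinset x0, g y| ≤ ∑ y ∈ H.neighborFinset x0, |g y| :=
          Finset.abs_sum_le_sum_abs _ _
      _ ≤ ∑ _y ∈ H.neighborFinset x0, |g x0| :=
          Finset.sum_le_sum fun y _ => hx0 y (Finset.mem_univ y)
      _ = (l : ℝ) * |g x0| := by
          rw [Finset.sum_const, nsmul_eq_mul, H.card_neighborFinset_eq_degree, hreg x0]
  have h0 : |g x0| ≤ 0 := by nlinarith [abs_nonneg (g x0)]
  have hx : |g x| ≤ 0 := le_trans (hx0 x (Finset.mem_univ x)) h0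
  exact abs_eq_zero.mp (le_antisymm hx (abs_nonneg (g x)))

lemma aux_const {n : ℕ} (H : SimpleGraph (Fin n)) [DecidableRel H.Adj] {l : ℕ}
    (hconn : H.Connected) (hreg : H.IsRegularOfDegree l) (g : Fin n → ℝ)
    (heig : ∀ x, (l : ℝ) * g x = ∑ y ∈ H.neighborFinset x, g y) (x y : Fin n) :
    g x = g y := by
  obtain ⟨x0, -, hx0⟩ := Finset.exists_max_image Finset.univ g ⟨x, Finset.mem_univ x⟩
  have step : ∀ a b : Fin n, g a = g x0 → H.Adj a b → g b = g x0 := by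
    intro a b ha hab
    have hsum : ∑ z ∈ H.neighborFinset a, g z = ∑ _z ∈ H.neighborFinset a, g x0 := by
      rw [Finset.sum_const, nsmul_eq_mul, H.card_neighborFinset_eq_degree, hreg a, ← heig a, ha]
    exact (Finset.sum_eq_sum_iff_of_le (fun z _ => hx0 z (Finset.mem_univ z))).mp hsum b
      ((H.mem_neighborFinset a b).mpr hab)
  have alongWalk : ∀ a z : Fin n, ∀ _w : H.Walk a z, g a = g x0 → g z = g x0 := by
    intro a z w
    induction w with
    | nil => exact id
    | cons h _p ih => intro ha; exact ih (step _ _ ha h)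
  have all : ∀ z, g z = g x0 := fun z =>
    (hconn.preconnected x0 z).elim fun w => alongWalk x0 z w rfl
  rw [all x, all y]

/-- Row formula for the adjacency matrix of `K_{m+1} □ H` acting on a vector. -/
lemma aux_mulVec {m : ℕ} (H : SimpleGraph (Fin m)) [DecidableRel H.Adj]
    (f : Fin (m + 1) × Fin m → ℝ) (i : Fin (m + 1)) (x : Fin m) :
    ((((⊤ : SimpleGraph (Fin (m + 1))) □ H).adjMatrix ℝ) *ᵥ f) (i, x)
      = (∑ y ∈ H.neighborFinset x, f (i, y)) + ((∑ j, f (j, x)) - f (i, x)) := by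
  rw [adjMatrix_mulVec_apply, neighborFinset_eq_filter, Finset.sum_filter]
  simp only [boxProd_adj, top_adj]
  rw [Fintype.sum_prod_type]
  have hinner : ∀ j : Fin (m + 1),
      (∑ y' : Fin m, if (i ≠ j ∧ x = y') ∨ (H.Adj x y' ∧ i = j) then f (j, y') else 0)
        = if j = i then ∑ y ∈ H.neighborFinset x, f (i, y) else f (j, x) := by
    intro j
    by_cases hj : j = i
    · subst hj
      rw [if_pos rfl]
      rw [neighborFinset_eq_filter, Finset.sum_filter]
      apply Finset.sum_congr rfl
      intro y' _
      by_cases ha : H.Adj x y'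
      · rw [if_pos (Or.inr ⟨ha, rfl⟩), if_pos ha]
      · rw [if_neg (by simp [ha]), if_neg ha]
    · rw [if_neg hj]
      have : ∀ y' : Fin m,
          (if (i ≠ j ∧ x = y') ∨ (H.Adj x y' ∧ i = j) then f (j, y') else 0)
            = if x = y' then f (j, y') else 0 := by
        intro y'
        by_cases hx : x = y'
        · rw [if_pos (Or.inl ⟨Ne.symm hj, hx⟩), if_pos hx]
        · rw [if_neg ?_, if_neg hx]
          rintro (⟨-, h⟩ | ⟨-, h⟩)
          exacts [hx h, hj h.symm]
      simp only [this]
      simp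
  simp only [hinner]
  rw [← Finset.add_sum_erase _ _ (Finset.mem_univ i), if_pos rfl]
  have : ∑ j ∈ Finset.univ.erase i, (if j = i then ∑ y ∈ H.neighborFinset x, f (i, y)
      else f (j, x)) = ∑ j ∈ Finset.univ.erase i, f (j, x) := by
    apply Finset.sum_congr rfl
    intro j hj
    rw [if_neg (Finset.ne_of_mem_erase hj)]
  rw [this, Finset.sum_erase_eq_sub (Finset.mem_univ i)]

/-- The summation functional. -/
noncomputable def sumLM (n : ℕ) : (Fin n → ℝ) →ₗ[ℝ] ℝ where
  toFun v := ∑ i, v i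
  map_add' u v := by simp [Finset.sum_add_distrib]
  map_smul' c v := by simp [Finset.mul_sum]

lemma aux_rank (m l : ℕ) (hl : 1 < l) (H : SimpleGraph (Fin m)) [DecidableRel H.Adj]
    (hconn : H.Connected) (hreg : H.IsRegularOfDegree l)
    (hml : 2 * l < m + 1) :
    Module.finrank ℝ (LinearMap.ker (Matrix.toLin'
      (((l : ℝ) - 1) • (1 : Matrix (Fin (m+1) × Fin m) (Fin (m+1) × Fin m) ℝ)
        - (((⊤ : SimpleGraph (Fin (m + 1))) □ H).adjMatrix ℝ)))) = m := by
  have hlR : (1 : ℝ) < l := by exact_mod_cast hl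
  have hmlR : 2 * (l : ℝ) < (m : ℝ) + 1 := by exact_mod_cast hml
  have hm : 0 < m := by omega
  set μ : ℝ := (l : ℝ) - 1 with hμdef
  set A := (((⊤ : SimpleGraph (Fin (m + 1))) □ H).adjMatrix ℝ) with hA
  set Φ : (Fin (m + 1) → ℝ) →ₗ[ℝ] (Fin (m + 1) × Fin m → ℝ) :=
    LinearMap.funLeft ℝ ℝ (Prod.fst : Fin (m + 1) × Fin m → Fin (m + 1)) with hΦdef
  have : Nonempty (Fin m) := ⟨⟨0, hm⟩⟩
  have hΦinj : Function.Injective Φ :=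
    LinearMap.funLeft_injective_of_surjective ℝ ℝ _ Prod.fst_surjective
  have hmem : ∀ f : Fin (m + 1) × Fin m → ℝ, Matrix.toLin' (μ • 1 - A) f = 0 ↔
      ∀ (i : Fin (m + 1)) (x : Fin m),
        μ * f (i, x) = (∑ y ∈ H.neighborFinset x, f (i, y)) + ((∑ j, f (j, x)) - f (i, x)) := by
    intro f
    rw [Matrix.toLin'_apply, Matrix.sub_mulVec, Matrix.smul_mulVec, Matrix.one_mulVec]
    constructor
    · intro h i x
      have := congrFun h (i, x)
      simp only [Pi.sub_apply, Pi.smul_apply, smul_eq_mul, Pi.zero_apply, sub_eq_zero] at this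
      rw [this, hA, aux_mulVec]
    · intro h
      funext p
      obtain ⟨i, x⟩ := p
      simp only [Pi.sub_apply, Pi.smul_apply, smul_eq_mul, Pi.zero_apply, sub_eq_zero]
      rw [hA, aux_mulVec, ← h i x]
  have hker : LinearMap.ker (Matrix.toLin' (μ • 1 - A))
      = Submodule.map Φ (LinearMap.ker (sumLM (m + 1))) := by
    apply le_antisymm
    · intro f hf
      have heq := (hmem f).mp (LinearMap.mem_ker.mp hf)
      set g : Fin m → ℝ := fun x => ∑ j, f (j, x) with hgdef
      have hg : ∀ x, (μ - (m : ℝ)) * g x = ∑ y ∈ H.neighborFinset x, g y := by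
        intro x
        have hsum : ∑ i : Fin (m + 1), (μ * f (i, x))
            = ∑ i : Fin (m + 1), ((∑ y ∈ H.neighborFinset x, f (i, y))
                + ((∑ j, f (j, x)) - f (i, x))) :=
          Finset.sum_congr rfl fun i _ => heq i x
        rw [← Finset.mul_sum, Finset.sum_add_distrib, Finset.sum_sub_distrib,
          Finset.sum_comm, Finset.sum_const, Finset.card_univ, Fintype.card_fin,
          nsmul_eq_mul] at hsum
        have h1 : (∑ y ∈ H.neighborFinset x, ∑ i : Fin (m + 1), f (i, y))
            = ∑ y ∈ H.neighborFinset x, g y := rfl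
        rw [h1] at hsum
        push_cast at hsum ⊢
        have h2 : (∑ i : Fin (m + 1), f (i, x)) = g x := rfl
        rw [h2] at hsum
        linarith
      have hbound : (l : ℝ) < |μ - (m : ℝ)| := by
        rw [abs_of_nonpos (by rw [hμdef]; linarith)]
        rw [hμdef]; linarith
      have hg0 : g = 0 := aux_bound H hreg g (μ - (m : ℝ)) hbound hg
      have hgx : ∀ x, (∑ j, f (j, x)) = 0 := fun x => congrFun hg0 x
      have hrow : ∀ i, ∀ x, (l : ℝ) * f (i, x) = ∑ y ∈ H.neighborFinset x, f (i, y) := by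
        intro i x
        have := heq i x
        rw [hgx x] at this
        rw [hμdef] at this
        linarith
      have hconst : ∀ i x y, f (i, x) = f (i, y) := fun i =>
        aux_const H hconn hreg (fun x => f (i, x)) (hrow i)
      refine ⟨fun j => f (j, ⟨0, hm⟩), ?_, ?_⟩
      · exact LinearMap.mem_ker.mpr (hgx ⟨0, hm⟩)
      · funext p
        obtain ⟨i, x⟩ := p
        exact hconst i ⟨0, hm⟩ x
    · rintro f ⟨v, hv, rfl⟩
      have hv0 : ∑ j, v j = 0 := hv
      apply LinearMap.mem_ker.mpr
      rw [hmem]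
      intro i x
      have hval : ∀ p : Fin (m + 1) × Fin m, Φ v p = v p.1 := fun p => rfl
      simp only [hval]
      rw [Finset.sum_const, nsmul_eq_mul, H.card_neighborFinset_eq_degree, hreg x, hv0,
        hμdef]
      ring
  rw [hker]
  rw [← LinearEquiv.finrank_eq (Submodule.equivMapOfInjective Φ hΦinj
    (LinearMap.ker (sumLM (m + 1))))]
  have hsurj : Function.Surjective (sumLM (m + 1)) := by
    intro r
    refine ⟨fun j => if j = 0 then r else 0, ?_⟩
    simp [sumLM]
  have hrank := LinearMap.finrank_range_add_finrank_ker (sumLM (m + 1))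
  rw [LinearMap.range_eq_top.mpr hsurj, finrank_top, Module.finrank_self] at hrank
  have hpi : Module.finrank ℝ (Fin (m + 1) → ℝ) = m + 1 := by
    simp [Module.finrank_pi]
  rw [hpi] at hrank
  omega

lemma aux_indub (m l : ℕ) (hm : 0 < m) (H : SimpleGraph (Fin m)) [DecidableRel H.Adj]
    (hreg : H.IsRegularOfDegree l) :
    IsIndubitable ((⊤ : SimpleGraph (Fin (m + 1))) □ H)
      (Prod.fst : Fin (m + 1) × Fin m → Fin (m + 1)) l 1 := by
  constructor
  · intro i; exact ⟨(i, ⟨0, hm⟩), rfl⟩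
  · rintro i ⟨j, x⟩
    by_cases hij : j = i
    · subst hij
      rw [if_pos rfl]
      have hset : {y : Fin (m + 1) × Fin m | (⊤ □ H).Adj (j, x) y ∧ y.1 = j}
          = (fun z => (j, z)) '' (H.neighborSet x) := by
        ext ⟨k, z⟩
        simp only [Set.mem_setOf_eq, boxProd_adj, top_adj, Set.mem_image, mem_neighborSet]
        constructor
        · rintro ⟨(⟨hne, -⟩ | ⟨ha, hk⟩), hk2⟩
          · exact absurd hk2.symm hne
          · exact ⟨z, ha, by rw [hk]⟩
        · rintro ⟨a, ha, heq⟩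
          obtain ⟨h1, h2⟩ := Prod.mk.injEq _ _ _ _ ▸ heq
          subst h1; subst h2
          exact ⟨Or.inr ⟨ha, rfl⟩, rfl⟩
      rw [hset, Set.ncard_image_of_injective _ (fun a b h => by simpa using h)]
      rw [Set.ncard_eq_toFinset_card']
      have h2 : (H.neighborSet x).toFinset = H.neighborFinset x := rfl
      rw [h2, H.card_neighborFinset_eq_degree, hreg x]
    · rw [if_neg hij]
      have hset : {y : Fin (m + 1) × Fin m | (⊤ □ H).Adj (j, x) y ∧ y.1 = i}
          = {(i, x)} := by
        ext ⟨k, z⟩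
        simp only [Set.mem_setOf_eq, boxProd_adj, top_adj, Set.mem_singleton_iff,
          Prod.mk.injEq]
        constructor
        · rintro ⟨(⟨-, hz⟩ | ⟨-, hk⟩), hk2⟩
          · exact ⟨hk2, hz.symm⟩
          · exact absurd (hk.trans hk2) hij
        · rintro ⟨rfl, rfl⟩
          exact ⟨Or.inl ⟨hij, rfl⟩, rfl⟩
      rw [hset, Set.ncard_singleton]

/-- Proposition cB. Let `H` be a connected `ℓ`-regular graph on `m` vertices
with `ℓ > 1`, and let `Γ = K_{m+1} □ H` be the Cartesian product of `H` and the complete graph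
`K_{m+1}` (whose adjacency matrix is `I_{m+1} ⊗ C + (J_{m+1} − I_{m+1}) ⊗ I_m` where `C` is the
adjacency matrix of `H`). If `m + 1 > 2ℓ`, then `λ = ℓ − 1` is an eigenvalue of `Γ` with
multiplicity exactly `m`, and the partition into the `m+1` copies of `H` (the fibers of the
first coordinate) is a full indubitable partition with parameters `(ℓ, 1)` corresponding
to `λ`. -/
theorem statement10 (m l : ℕ) (hl : 1 < l) (H : SimpleGraph (Fin m)) [DecidableRel H.Adj]
    (hconn : H.Connected) (hreg : H.IsRegularOfDegree l)
    (hml : 2 * l < m + 1) :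
    eigMult (((⊤ : SimpleGraph (Fin (m + 1))) □ H).adjMatrix ℝ) ((l : ℝ) - 1) = m ∧
    IsIndubitable ((⊤ : SimpleGraph (Fin (m + 1))) □ H)
      (Prod.fst : Fin (m + 1) × Fin m → Fin (m + 1)) l 1 := by
  have hm : 0 < m := by omega
  refine ⟨?_, aux_indub m l hm H hreg⟩
  exact aux_rank m l hl H hconn hreg hml
end

section
/- Let m ≥ 4 and let Γ be the Cartesian product of a cycle of length m and the complete graph on m+1 vertices. Then λ = 1 is an eigenvalue of Γ with multiplicity exactly m, and the partition of the vertex set into the m+1 copies of the cycle is a full indubitable partition with parameters (2,1) corresponding to λ. -/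
open Matrix Finset Kronecker SimpleGraph

/-- The cycle on `ℤ/nℤ`: vertices are adjacent when they differ by `±1`. -/
def cycleZ (n : ℕ) : SimpleGraph (ZMod n) := SimpleGraph.fromRel (fun x y => x - y = 1)

instance (n : ℕ) : DecidableRel (cycleZ n).Adj := fun x y =>
  inferInstanceAs (Decidable (x ≠ y ∧ (x - y = 1 ∨ y - x = 1)))

lemma shiftConst {m : ℕ} [NeZero m] (g : ZMod m → ℝ) (h : ∀ x, g (x + 1) = g x)
    (x y : ZMod m) : g x = g y := by
  have key : ∀ (n : ℕ) (x : ZMod m), g (x + n) = g x := by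
    intro n
    induction n with
    | zero => simp
    | succ n ih => intro x; push_cast; rw [← add_assoc, h, ih]
  have hxy : x + ((y - x).val : ZMod m) = y := by
    rw [ZMod.natCast_val, ZMod.cast_id]; ring
  rw [← hxy, key]


lemma sZero {m : ℕ} (hm : 4 ≤ m) [NeZero m] (s : ZMod m → ℝ)
    (hs : ∀ x, s (x + 1) + s (x - 1) = (1 - (m : ℝ)) * s x) : ∀ x, s x = 0 := by
  obtain ⟨x0, hx0⟩ := Finite.exists_max (fun x : ZMod m => |s x|)
  have hm' : (4 : ℝ) ≤ m := by exact_mod_cast hm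
  have h0 : |s x0| = 0 := by
    have h2 : ((m : ℝ) - 1) * |s x0| ≤ 2 * |s x0| := by
      calc ((m : ℝ) - 1) * |s x0| = |(1 - (m : ℝ)) * s x0| := by
            rw [abs_mul, abs_of_nonpos (show (1:ℝ) - (m:ℝ) ≤ 0 by linarith)]; ring
        _ = |s (x0 + 1) + s (x0 - 1)| := by rw [hs]
        _ ≤ |s (x0 + 1)| + |s (x0 - 1)| := abs_add_le _ _
        _ ≤ 2 * |s x0| := by have := hx0 (x0 + 1); have := hx0 (x0 - 1); linarith
    have := abs_nonneg (s x0)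
    nlinarith
  intro x
  have := hx0 x
  have := abs_nonneg (s x)
  have : |s x| = 0 := by linarith [h0 ▸ hx0 x]
  exact abs_eq_zero.mp this


lemma two_ne {m : ℕ} (hm : 4 ≤ m) : (2 : ZMod m) ≠ 0 := by
  have : ((2 : ℕ) : ZMod m) ≠ 0 := by
    rw [Ne, ZMod.natCast_eq_zero_iff]
    intro h; have := Nat.le_of_dvd (by norm_num) h; omega
  simpa using this


lemma cycleAdj {m : ℕ} (hm : 4 ≤ m) (x y : ZMod m) :
    (cycleZ m).Adj x y ↔ y = x + 1 ∨ y = x - 1 := by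
  have h2 := two_ne hm
  have h1 : (1 : ZMod m) ≠ 0 := by
    intro h; apply h2; rw [show (2 : ZMod m) = 1 + 1 by ring, h, add_zero]
  constructor
  · rintro ⟨hne, h | h⟩
    · right; linear_combination -h
    · left; linear_combination h
  · rintro (rfl | rfl)
    · exact ⟨by intro h; exact h1 (by linear_combination -h), Or.inr (by ring)⟩
    · exact ⟨by intro h; exact h1 (by linear_combination h), Or.inl (by ring)⟩

lemma addOne_ne_subOne {m : ℕ} (hm : 4 ≤ m) (x : ZMod m) : x + 1 ≠ x - 1 := by
  intro h; exact two_ne hm (by linear_combination h)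


lemma mulVec_eq {m : ℕ} (hm : 4 ≤ m) [NeZero m]
    (v : ZMod m × Fin (m + 1) → ℝ) (x : ZMod m) (i : Fin (m + 1)) :
    (((cycleZ m □ (⊤ : SimpleGraph (Fin (m + 1)))).adjMatrix ℝ).mulVec v) (x, i)
      = v (x + 1, i) + v (x - 1, i) + ((∑ j, v (x, j)) - v (x, i)) := by
  classical
  have hsplit : ∀ p : ZMod m × Fin (m + 1),
      ((cycleZ m □ (⊤ : SimpleGraph (Fin (m + 1)))).adjMatrix ℝ) (x, i) p * v p
        = (if (cycleZ m).Adj x p.1 ∧ i = p.2 then v p else 0)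
          + (if x = p.1 ∧ i ≠ p.2 then v p else 0) := by
    intro p
    simp only [adjMatrix_apply, boxProd_adj, top_adj]
    by_cases h1 : (cycleZ m).Adj x p.1 ∧ i = p.2
    · have h2 : ¬ (x = p.1 ∧ i ≠ p.2) := fun h => h1.1.ne h.1
      simp [h1, h1.1, h1.2, h2, fun h => h1.1.ne h]
    · by_cases h2 : x = p.1 ∧ i ≠ p.2
      · simp [h1, h2, h2.1, h2.2]
      · have : ¬ ((cycleZ m).Adj x p.1 ∧ i = p.2 ∨ i ≠ p.2 ∧ x = p.1) := by tauto
        rw [if_neg this, if_neg h1, if_neg h2, zero_mul, add_zero]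
  rw [Matrix.mulVec, dotProduct]
  simp only [hsplit]
  rw [Finset.sum_add_distrib]
  congr 1
  · -- first sum: neighbors in the cycle direction
    rw [Fintype.sum_prod_type]
    have inner : ∀ y : ZMod m,
        (∑ j, if (cycleZ m).Adj x y ∧ i = j then v (y, j) else 0)
          = if y = x + 1 ∨ y = x - 1 then v (y, i) else 0 := by
      intro y
      by_cases h : (cycleZ m).Adj x y
      · simp only [h, true_and]
        rw [if_pos ((cycleAdj hm x y).mp h)]
        simp
      · rw [if_neg (fun hc => h ((cycleAdj hm x y).mpr hc))]
        simp [h]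
    simp only [inner]
    have split2 : ∀ y : ZMod m, (if y = x + 1 ∨ y = x - 1 then v (y, i) else 0)
        = (if y = x + 1 then v (x + 1, i) else 0) + (if y = x - 1 then v (x - 1, i) else 0) := by
      intro y
      by_cases h1 : y = x + 1
      · subst h1
        rw [if_neg (addOne_ne_subOne hm x)]
        simp
      · by_cases h2 : y = x - 1
        · subst h2; simp [h1]
        · simp [h1, h2]
    simp only [split2]
    rw [Finset.sum_add_distrib]
    simp [Finset.sum_ite_eq']
  · -- second sum: neighbors in the clique direction
    rw [Fintype.sum_prod_type]
    have inner : ∀ y : ZMod m,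
        (∑ j, if x = y ∧ i ≠ j then v (y, j) else 0)
          = if x = y then (∑ j, v (x, j)) - v (x, i) else 0 := by
      intro y
      by_cases h : x = y
      · subst h
        simp only [true_and]
        have : ∀ j, (if i ≠ j then v (x, j) else 0) = v (x, j) - (if i = j then v (x, j) else 0) := by
          intro j; by_cases hj : i = j <;> simp [hj]
        simp only [this, Finset.sum_sub_distrib, Finset.sum_ite_eq]
        simp
      · simp [h]
    simp only [inner]
    simp

noncomputable def sumL (m : ℕ) : (Fin (m + 1) → ℝ) →ₗ[ℝ] ℝ where
  toFun c := ∑ j, c j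
  map_add' a b := by simp [Finset.sum_add_distrib]
  map_smul' r a := by simp [Finset.mul_sum]

def liftL (m : ℕ) : (Fin (m + 1) → ℝ) →ₗ[ℝ] (ZMod m × Fin (m + 1) → ℝ) where
  toFun c := fun p => c p.2
  map_add' a b := rfl
  map_smul' r a := rfl

lemma ker_eq {m : ℕ} (hm : 4 ≤ m) [NeZero m] :
    LinearMap.ker (Matrix.toLin' ((1 : ℝ) • (1 : Matrix (ZMod m × Fin (m + 1)) (ZMod m × Fin (m + 1)) ℝ)
        - ((cycleZ m □ (⊤ : SimpleGraph (Fin (m + 1)))).adjMatrix ℝ)))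
      = Submodule.map (liftL m) (LinearMap.ker (sumL m)) := by
  classical
  set A := ((cycleZ m □ (⊤ : SimpleGraph (Fin (m + 1)))).adjMatrix ℝ) with hA
  have hmem : ∀ v, v ∈ LinearMap.ker (Matrix.toLin' ((1 : ℝ) • 1 - A)) ↔
      ∀ p, A.mulVec v p = v p := by
    intro v
    rw [LinearMap.mem_ker, Matrix.toLin'_apply, sub_mulVec, one_smul, one_mulVec]
    constructor
    · intro h p
      have := congrFun h p
      simp only [Pi.sub_apply, Pi.zero_apply] at this
      linarith
    · intro h; funext p; simp [h p]
  ext v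
  rw [hmem]
  constructor
  · intro hv
    set s : ZMod m → ℝ := fun x => ∑ j, v (x, j) with hsdef
    have hv' : ∀ x i, v (x + 1, i) + v (x - 1, i) + (s x - v (x, i)) = v (x, i) := by
      intro x i
      have := hv (x, i)
      rwa [mulVec_eq hm] at this
    have hs : ∀ x, s (x + 1) + s (x - 1) = (1 - (m : ℝ)) * s x := by
      intro x
      have hsum : (∑ i, (v (x + 1, i) + v (x - 1, i) + (s x - v (x, i)))) = ∑ i, v (x, i) :=
        Finset.sum_congr rfl (fun i _ => hv' x i)
      rw [Finset.sum_add_distrib, Finset.sum_add_distrib, Finset.sum_sub_distrib,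
        Finset.sum_const, Finset.card_univ] at hsum
      simp only [Fintype.card_fin, nsmul_eq_mul] at hsum
      have : s (x + 1) + s (x - 1) + ((↑(m + 1) : ℝ) * s x - s x) = s x := hsum
      push_cast at this
      linarith
    have hs0 : ∀ x, s x = 0 := sZero hm s hs
    have hrec : ∀ (i : Fin (m + 1)) (x : ZMod m),
        v (x + 1, i) + v (x - 1, i) = 2 * v (x, i) := by
      intro i x
      have h1 := hv' x i
      have h2 := hs0 x
      linarith
    have hshift : ∀ (i : Fin (m + 1)) (x : ZMod m), v (x + 1, i) = v (x, i) := by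
      intro i
      set d : ZMod m → ℝ := fun x => v (x + 1, i) - v (x, i) with hd
      have hdshift : ∀ x, d (x + 1) = d x := by
        intro x
        have h1 := hrec i (x + 1)
        have hx : x + 1 - 1 = x := by ring
        rw [hx] at h1
        simp only [hd]
        linarith
      have hsum0 : ∑ x : ZMod m, d x = 0 := by
        have h1 : ∑ x : ZMod m, v (x + 1, i) = ∑ x : ZMod m, v (x, i) :=
          Fintype.sum_equiv (Equiv.addRight (1 : ZMod m)) _ _ (fun x => rfl)
        simp only [hd, Finset.sum_sub_distrib, h1, sub_self]
      have hdc : ∀ x, d x = d 0 := fun x => shiftConst d hdshift x 0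
      have hmd : (m : ℝ) * d 0 = 0 := by
        have : ∑ x : ZMod m, d x = ∑ x : ZMod m, d 0 := Finset.sum_congr rfl (fun x _ => hdc x)
        rw [hsum0, Finset.sum_const, Finset.card_univ, ZMod.card, nsmul_eq_mul] at this
        linarith
      have hd0 : d 0 = 0 := by
        have hm0 : (m : ℝ) ≠ 0 := Nat.cast_ne_zero.mpr (NeZero.ne m)
        rcases mul_eq_zero.mp hmd with h | h
        · exact absurd h hm0
        · exact h
      intro x
      have := hdc x
      rw [hd0] at this
      simp only [hd] at this
      linarith
    refine ⟨fun j => v (0, j), ?_, ?_⟩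
    · show (∑ j, v (0, j)) = 0
      exact hs0 0
    · funext p
      show v (0, p.2) = v p
      have := shiftConst (fun x => v (x, p.2)) (hshift p.2) 0 p.1
      simpa using this
  · rintro ⟨c, hc, rfl⟩
    have hc' : (∑ j, c j) = 0 := hc
    intro p
    obtain ⟨x, i⟩ := p
    rw [show (liftL m) c = (fun p : ZMod m × Fin (m + 1) => c p.2) from rfl]
    rw [mulVec_eq hm]
    simp only
    rw [hc']
    ring

lemma finrank_ker_sumL (m : ℕ) : Module.finrank ℝ (LinearMap.ker (sumL m)) = m := by
  classical
  have hsurj : Function.Surjective (sumL m) := by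
    intro r
    refine ⟨fun j : Fin (m + 1) => if j = 0 then r else 0, ?_⟩
    show (∑ j : Fin (m + 1), if j = 0 then r else 0) = r
    simp
  have h := LinearMap.finrank_range_add_finrank_ker (sumL m)
  rw [LinearMap.range_eq_top.mpr hsurj] at h
  simp only [finrank_top, Module.finrank_self] at h
  have hpi : Module.finrank ℝ (Fin (m + 1) → ℝ) = m + 1 := by
    simp [Module.finrank_pi]
  rw [hpi] at h
  omega


/-- Corollary eB. Let `m ≥ 4` and let `Γ` be the Cartesian product of a
cycle of length `m` and the complete graph on `m+1` vertices. Then `λ = 1` is an eigenvalue of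
`Γ` with multiplicity exactly `m`, and the partition into the `m+1` copies of the cycle (the
fibers of the second coordinate) is a full indubitable partition with parameters `(2, 1)`
corresponding to `λ`. -/
theorem statement11 (m : ℕ) (hm : 4 ≤ m) [NeZero m] :
    eigMult ((cycleZ m □ (⊤ : SimpleGraph (Fin (m + 1)))).adjMatrix ℝ) 1 = m ∧
    IsIndubitable (cycleZ m □ (⊤ : SimpleGraph (Fin (m + 1))))
      (Prod.snd : ZMod m × Fin (m + 1) → Fin (m + 1)) 2 1 := by
  constructor
  · unfold eigMult
    rw [ker_eq hm]
    have hinj : Function.Injective (liftL m) := by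
      intro a b h
      funext j
      exact congrFun h (0, j)
    rw [← (Submodule.equivMapOfInjective (liftL m) hinj (LinearMap.ker (sumL m))).finrank_eq]
    exact finrank_ker_sumL m
  · constructor
    · intro i; exact ⟨(0, i), rfl⟩
    · rintro i ⟨z, j⟩
      by_cases hji : j = i
      · subst hji
        rw [if_pos rfl]
        have hset : {y : ZMod m × Fin (m + 1) |
              (cycleZ m □ (⊤ : SimpleGraph (Fin (m + 1)))).Adj (z, j) y ∧ y.2 = j}
            = {(z + 1, j), (z - 1, j)} := by
          ext y
          simp only [Set.mem_setOf_eq, boxProd_adj, top_adj, Set.mem_insert_iff,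
            Set.mem_singleton_iff]
          constructor
          · rintro ⟨h, hy2⟩
            rcases h with ⟨hc, _⟩ | ⟨hne, _⟩
            · rcases (cycleAdj hm z y.1).mp hc with h1 | h1
              · left; exact Prod.ext h1 hy2
              · right; exact Prod.ext h1 hy2
            · exact absurd hy2.symm hne
          · rintro (rfl | rfl)
            · exact ⟨Or.inl ⟨(cycleAdj hm z _).mpr (Or.inl rfl), rfl⟩, rfl⟩
            · exact ⟨Or.inl ⟨(cycleAdj hm z _).mpr (Or.inr rfl), rfl⟩, rfl⟩
        rw [hset, Set.ncard_pair]
        intro h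
        have h1 : z + 1 = z - 1 := (Prod.ext_iff.mp h).1
        exact two_ne hm (by linear_combination h1)
      · rw [if_neg hji]
        have hset : {y : ZMod m × Fin (m + 1) |
              (cycleZ m □ (⊤ : SimpleGraph (Fin (m + 1)))).Adj (z, j) y ∧ y.2 = i}
            = {(z, i)} := by
          ext y
          simp only [Set.mem_setOf_eq, boxProd_adj, top_adj, Set.mem_singleton_iff]
          constructor
          · rintro ⟨h, hy2⟩
            rcases h with ⟨_, hj⟩ | ⟨_, hz⟩
            · exact absurd (hj.trans hy2) hji
            · exact Prod.ext hz.symm hy2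
          · rintro rfl
            exact ⟨Or.inr ⟨hji, rfl⟩, rfl⟩
        rw [hset, Set.ncard_singleton]
end

section
/- Let Γ be a connected k-regular graph on v vertices that has full indubitable partitions corresponding to two distinct eigenvalues λ and λ' of multiplicities m and m', respectively. Let E_λ and E_{λ'} be the corresponding spectral idempotents, and let K and K' be the 01-matrices such that E_λ = ((m+1)/v)·K − (1/v)·J and E_{λ'} = ((m'+1)/v)·K' − (1/v)·J. Then (m+1)(m'+1) divides v, and K and K' are simultaneously permutation-similar to J_{m'+1} ⊗ I_{m+1} ⊗ J_ℓ and I_{m'+1} ⊗ J_{m+1} ⊗ J_ℓ, respectively, where ℓ = v/((m+1)(m'+1)). -/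
open Matrix Finset Kronecker SimpleGraph

private lemma exists_adj_ne' {V ι : Type*} {G : SimpleGraph V} {c : V → ι} :
    ∀ {x y : V}, G.Walk x y → c x ≠ c y → ∃ u w, G.Adj u w ∧ c u ≠ c w := by
  intro x y p
  induction p with
  | nil => exact fun h => absurd rfl h
  | @cons a b d hab p ih =>
    intro h
    by_cases hc : c a = c b
    · exact ih (fun hbd => h (hc.trans hbd))
    · exact ⟨a, b, hab, hc⟩

private lemma lam_ne_k {v k : ℕ} {G : SimpleGraph (Fin v)} [DecidableRel G.Adj]
    (hconn : G.Connected) (hreg : G.IsRegularOfDegree k) {lam : ℝ} {m : ℕ}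
    (hm0 : 0 < m) (hfull : HasFullIndubitable G lam m) : lam ≠ (k : ℝ) := by
  intro heq
  obtain ⟨c, a, b, ⟨hcsurj, hcount⟩, hab⟩ := hfull
  have h01 : (0 : Fin (m+1)) ≠ 1 := by
    intro h
    have h2 := congrArg Fin.val h
    rw [Fin.val_zero, Fin.val_one', Nat.mod_eq_of_lt (by omega)] at h2
    omega
  obtain ⟨x0, hx0⟩ := hcsurj 0
  obtain ⟨x1, hx1⟩ := hcsurj 1
  obtain ⟨p⟩ := hconn.preconnected x0 x1
  obtain ⟨u, w, huw, hcuw⟩ := exists_adj_ne' (c := c) p (by rw [hx0, hx1]; exact h01)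
  have hb := hcount (c w) u
  rw [if_neg hcuw] at hb
  have hbpos : 0 < b := by
    rw [← hb]
    exact (Set.ncard_pos (Set.toFinite _)).mpr ⟨w, huw, rfl⟩
  have ha := hcount (c u) u
  rw [if_pos rfl] at ha
  have hak : a ≤ k := by
    have hsub : {y : Fin v | G.Adj u y ∧ c y = c u} ⊆ {y : Fin v | G.Adj u y} :=
      fun y hy => hy.1
    have hle := Set.ncard_le_ncard hsub (Set.toFinite _)
    rw [ha] at hle
    have hdeg : {y : Fin v | G.Adj u y}.ncard = k := by
      have h1 : {y : Fin v | G.Adj u y} = (G.neighborSet u) := rfl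
      rw [h1, Set.ncard_eq_toFinset_card']
      have h2 : (G.neighborSet u).toFinset = G.neighborFinset u := by
        simp [SimpleGraph.neighborFinset]
      rw [h2]
      exact hreg u
    omega
  have hR : (a : ℝ) = (k : ℝ) + (b : ℝ) := by rw [← heq, ← hab]; ring
  have : a = k + b := by exact_mod_cast hR
  omega

private lemma card_filter_eq_sum01 {v : ℕ} (f : Fin v → ℝ) (h01 : ∀ l, f l = 0 ∨ f l = 1) :
    ((Finset.univ.filter fun l => f l = 1).card : ℝ) = ∑ l, f l := by
  rw [Finset.card_filter]
  push_cast
  exact Finset.sum_congr rfl fun l _ => by rcases h01 l with h | h <;> simp [h]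

private lemma key_struct {v : ℕ} (hv : 0 < (v:ℝ)) (a : ℝ) (ha : a ≠ 0)
    (E K : Matrix (Fin v) (Fin v) ℝ)
    (hsymm : Eᵀ = E) (hidem : E * E = E)
    (hrow : ∀ i, ∑ l, E i l = 0)
    (hK01 : ∀ i j, K i j = 0 ∨ K i j = 1)
    (hKdef : E = (a / (v:ℝ)) • K - ((1:ℝ) / (v:ℝ)) • matJ (Fin v) (Fin v)) :
    (∀ i j, K i j = K j i) ∧ (∀ i, K i i = 1) ∧
    (∀ i j, K i j = 1 → ∀ l, K i l = K j l) ∧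
    (∀ i, a * ∑ l, K i l = v) := by
  have hvne : (v:ℝ) ≠ 0 := ne_of_gt hv
  have hEentry : ∀ i j, E i j = (a / v) * K i j - 1 / v := by
    intro i j; rw [hKdef]; simp [matJ, Matrix.sub_apply, Matrix.smul_apply]
  have hcancel : ∀ {x y : ℝ}, (a / v) * x - 1 / v = (a / v) * y - 1 / v → x = y := by
    intro x y h
    have h2 : (a / v) * x = (a / v) * y := by linarith
    exact mul_left_cancel₀ (div_ne_zero ha hvne) h2
  have hEsymm : ∀ i j, E i j = E j i := by
    intro i j; conv_lhs => rw [← hsymm, Matrix.transpose_apply]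
  have hKsymm : ∀ i j, K i j = K j i := by
    intro i j
    exact hcancel (by rw [← hEentry, ← hEentry, hEsymm])
  have hEsq : ∀ i j, E i j = ∑ l, E i l * E j l := by
    intro i j
    conv_lhs => rw [← hidem]
    rw [Matrix.mul_apply]
    exact Finset.sum_congr rfl fun l _ => by rw [hEsymm l j]
  have hEdiag_nonneg : ∀ i, 0 ≤ E i i := by
    intro i
    rw [hEsq]
    exact Finset.sum_nonneg fun l _ => mul_self_nonneg _
  have hKdiag : ∀ i, K i i = 1 := by
    intro i
    rcases hK01 i i with h | h
    · exfalso
      have h1 := hEdiag_nonneg i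
      rw [hEentry, h] at h1
      have h2 : (0:ℝ) < 1 / v := by positivity
      linarith
    · exact h
  have hrowsE : ∀ i j, K i j = 1 → ∀ l, E i l = E j l := by
    intro i j hij l
    have hsum0 : ∑ x, (E i x - E j x) ^ 2 = 0 := by
      have hexp : ∀ x : Fin v, (E i x - E j x) ^ 2 =
          E i x * E i x - 2 * (E i x * E j x) + E j x * E j x := by intro x; ring
      rw [Finset.sum_congr rfl fun x _ => hexp x]
      rw [Finset.sum_add_distrib, Finset.sum_sub_distrib, ← Finset.mul_sum]
      rw [← hEsq i i, ← hEsq i j, ← hEsq j j]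
      rw [hEentry i i, hEentry i j, hEentry j j, hKdiag i, hKdiag j, hij]
      ring
    have h1 := (Finset.sum_eq_zero_iff_of_nonneg (fun x _ => sq_nonneg (E i x - E j x))).mp
      hsum0 l (Finset.mem_univ l)
    have h2 := pow_eq_zero_iff (n := 2) (by norm_num) |>.mp h1
    linarith
  have hrowsK : ∀ i j, K i j = 1 → ∀ l, K i l = K j l := by
    intro i j hij l
    exact hcancel (by rw [← hEentry, ← hEentry]; exact hrowsE i j hij l)
  refine ⟨hKsymm, hKdiag, hrowsK, ?_⟩
  intro i
  have h0 := hrow i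
  rw [Finset.sum_congr rfl fun l _ => hEentry i l] at h0
  rw [Finset.sum_sub_distrib, ← Finset.mul_sum, Finset.sum_const, Finset.card_univ,
    Fintype.card_fin, nsmul_eq_mul] at h0
  have h1 : (a / v) * ∑ l, K i l = 1 := by
    have hv1 : (v:ℝ) * (1 / v) = 1 := by field_simp
    linarith [h0, hv1]
  field_simp at h1
  linarith

private lemma partition_equiv {v n : ℕ} (hv : 0 < (v:ℝ))
    (K : Matrix (Fin v) (Fin v) ℝ)
    (hK01 : ∀ i j, K i j = 0 ∨ K i j = 1)
    (hKsymm : ∀ i j, K i j = K j i) (hKdiag : ∀ i, K i i = 1)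
    (hKrows : ∀ i j, K i j = 1 → ∀ l, K i l = K j l)
    (hKsum : ∀ i, ((n:ℝ)+1) * ∑ l, K i l = v) :
    ∃ g : Fin v → Fin (n+1), Function.Surjective g ∧ ∀ i j, (g i = g j ↔ K i j = 1) := by
  classical
  have hn1 : ((n:ℝ)+1) ≠ 0 := by positivity
  let st : Setoid (Fin v) :=
    ⟨fun i j => K i j = 1,
      ⟨hKdiag, fun {i j} h => by rw [hKsymm j i]; exact h,
        fun {i j l} hij hjl => by rw [hKrows i j hij l]; exact hjl⟩⟩
  letI : DecidableRel st.r := fun _ _ => Classical.propDecidable _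
  have hfibcard : ∀ q : Quotient st,
      ((n:ℝ)+1) * (Fintype.card {x // Quotient.mk st x = q} : ℝ) = v := by
    intro q
    have hrepr : ∀ x : Fin v, (Quotient.mk st x = q) ↔ K x q.out = 1 := by
      intro x
      constructor
      · intro h
        exact Quotient.exact (h.trans (Quotient.out_eq q).symm)
      · intro h
        rw [← Quotient.out_eq q]
        exact Quotient.sound h
    have hcard1 : Fintype.card {x // Quotient.mk st x = q}
        = (Finset.univ.filter fun x => K q.out x = 1).card := by
      rw [Fintype.card_subtype]
      congr 1
      apply Finset.filter_congr
      intro x _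
      rw [hrepr x, hKsymm]
    rw [hcard1]
    rw [card_filter_eq_sum01 _ (fun l => hK01 q.out l)]
    exact hKsum q.out
  have hvne : (v:ℝ) ≠ 0 := ne_of_gt hv
  have h3 : ∀ q : Quotient st, (Fintype.card {x // Quotient.mk st x = q} : ℝ)
      = (v:ℝ) / ((n:ℝ)+1) := by
    intro q
    rw [eq_div_iff hn1]
    linarith [hfibcard q]
  have hsq : (Fintype.card (Quotient st) : ℝ) * ((v:ℝ) / ((n:ℝ)+1)) = v := by
    have h1 : Fintype.card (Fin v) = ∑ q : Quotient st, Fintype.card {x // Quotient.mk st x = q} := by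
      rw [← Fintype.card_sigma]
      exact (Fintype.card_congr (Equiv.sigmaFiberEquiv fun x => Quotient.mk st x)).symm
    have h2 : (v:ℝ) = ∑ q : Quotient st, (Fintype.card {x // Quotient.mk st x = q} : ℝ) := by
      rw [← Nat.cast_sum, ← h1, Fintype.card_fin]
    calc (Fintype.card (Quotient st) : ℝ) * ((v:ℝ) / ((n:ℝ)+1))
        = ∑ _q : Quotient st, (v:ℝ)/((n:ℝ)+1) := by
          rw [Finset.sum_const, Finset.card_univ, nsmul_eq_mul]
      _ = ∑ q : Quotient st, (Fintype.card {x // Quotient.mk st x = q} : ℝ) :=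
          Finset.sum_congr rfl fun q _ => (h3 q).symm
      _ = v := h2.symm
  have hcardQ : Fintype.card (Quotient st) = n + 1 := by
    have ht : (v:ℝ) / ((n:ℝ)+1) ≠ 0 := div_ne_zero hvne hn1
    have hc : (Fintype.card (Quotient st) : ℝ) = (n:ℝ)+1 := by
      apply mul_right_cancel₀ ht
      rw [hsq]
      field_simp
    exact_mod_cast hc
  let eq : Quotient st ≃ Fin (n+1) := Fintype.equivFinOfCardEq hcardQ
  refine ⟨fun x => eq (Quotient.mk st x), ?_, ?_⟩
  · intro p
    obtain ⟨x, hx⟩ := Quotient.exists_rep (eq.symm p)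
    refine ⟨x, ?_⟩
    show eq (Quotient.mk st x) = p
    rw [hx]
    simp
  · intro i j
    constructor
    · intro h
      exact Quotient.exact (eq.injective h)
    · intro h
      exact congrArg eq (Quotient.sound h)

/-- Proposition xO. Let `Γ` be a connected `k`-regular graph on `v` vertices
with full indubitable partitions corresponding to distinct eigenvalues `λ` and `λ'` of
multiplicities `m` and `m'`, with spectral idempotents `E_λ = ((m+1)/v)·K − (1/v)·J` and
`E_{λ'} = ((m'+1)/v)·K' − (1/v)·J` for 01-matrices `K`, `K'`. Then `(m+1)(m'+1) ∣ v` and `K`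
and `K'` are simultaneously permutation-similar to `J_{m'+1} ⊗ I_{m+1} ⊗ J_ℓ` and
`I_{m'+1} ⊗ J_{m+1} ⊗ J_ℓ` with `ℓ = v/((m+1)(m'+1))`. -/
theorem statement13 (v k m m' : ℕ) (G : SimpleGraph (Fin v)) [DecidableRel G.Adj]
    (hconn : G.Connected) (hreg : G.IsRegularOfDegree k)
    (lam lam' : ℝ) (hne : lam ≠ lam')
    (hm : eigMult (G.adjMatrix ℝ) lam = m) (hm0 : 0 < m)
    (hm' : eigMult (G.adjMatrix ℝ) lam' = m') (hm0' : 0 < m')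
    (hfull : HasFullIndubitable G lam m) (hfull' : HasFullIndubitable G lam' m')
    (E E' K K' : Matrix (Fin v) (Fin v) ℝ)
    (hE : IsSpectralIdempotent (G.adjMatrix ℝ) E lam)
    (hE' : IsSpectralIdempotent (G.adjMatrix ℝ) E' lam')
    (hK01 : ∀ i j, K i j = 0 ∨ K i j = 1) (hK01' : ∀ i j, K' i j = 0 ∨ K' i j = 1)
    (hK : E = (((m : ℝ) + 1) / (v : ℝ)) • K - ((1 : ℝ) / (v : ℝ)) • matJ (Fin v) (Fin v))
    (hK' : E' = (((m' : ℝ) + 1) / (v : ℝ)) • K' - ((1 : ℝ) / (v : ℝ)) • matJ (Fin v) (Fin v)) :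
    (m + 1) * (m' + 1) ∣ v ∧
    ∃ e : Fin v ≃ Fin (m' + 1) × Fin (m + 1) × Fin (v / ((m + 1) * (m' + 1))),
      (∀ i j, K i j =
        (matJ (Fin (m' + 1)) (Fin (m' + 1)) ⊗ₖ
          ((1 : Matrix (Fin (m + 1)) (Fin (m + 1)) ℝ) ⊗ₖ
            matJ (Fin (v / ((m + 1) * (m' + 1)))) (Fin (v / ((m + 1) * (m' + 1))))))
          (e i) (e j)) ∧
      (∀ i j, K' i j =
        ((1 : Matrix (Fin (m' + 1)) (Fin (m' + 1)) ℝ) ⊗ₖ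
          (matJ (Fin (m + 1)) (Fin (m + 1)) ⊗ₖ
            matJ (Fin (v / ((m + 1) * (m' + 1)))) (Fin (v / ((m + 1) * (m' + 1))))))
          (e i) (e j)) := by
    classical
  obtain ⟨hEs, hEi, hAE, _⟩ := hE
  obtain ⟨hEs', hEi', hAE', _⟩ := hE'
  have hvpos : 0 < v := by
    have h := hconn.nonempty
    exact Fin.pos_iff_nonempty.mpr h
  have hv : (0:ℝ) < v := by exact_mod_cast hvpos
  have hvne : (v:ℝ) ≠ 0 := ne_of_gt hv
  set A := G.adjMatrix ℝ with hA
  have hAJ : A * matJ (Fin v) (Fin v) = (k:ℝ) • matJ (Fin v) (Fin v) := by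
    ext i j
    rw [hA, SimpleGraph.adjMatrix_mul_apply]
    simp [matJ, hreg i]
  have hsymmA : Aᵀ = A := SimpleGraph.transpose_adjMatrix G
  have hEA : E * A = lam • E := by
    have h1 : E * A = (A * E)ᵀ := by rw [Matrix.transpose_mul, hsymmA, hEs]
    rw [h1, hAE, Matrix.transpose_smul, hEs]
  have hEA' : E' * A = lam' • E' := by
    have h1 : E' * A = (A * E')ᵀ := by rw [Matrix.transpose_mul, hsymmA, hEs']
    rw [h1, hAE', Matrix.transpose_smul, hEs']
  have hlamk : lam ≠ (k:ℝ) := lam_ne_k hconn hreg hm0 hfull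
  have hlamk' : lam' ≠ (k:ℝ) := lam_ne_k hconn hreg hm0' hfull'
  have hEJ : E * matJ (Fin v) (Fin v) = 0 := by
    have h1 : (E * A) * matJ (Fin v) (Fin v) = lam • (E * matJ (Fin v) (Fin v)) := by
      rw [hEA, Matrix.smul_mul]
    have h2 : E * (A * matJ (Fin v) (Fin v)) = (k:ℝ) • (E * matJ (Fin v) (Fin v)) := by
      rw [hAJ, Matrix.mul_smul]
    have h3 : (lam - (k:ℝ)) • (E * matJ (Fin v) (Fin v)) = 0 := by
      rw [sub_smul, ← h1, ← h2, Matrix.mul_assoc, sub_self]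
    rcases smul_eq_zero.mp h3 with h | h
    · exact absurd (sub_eq_zero.mp h) hlamk
    · exact h
  have hEJ' : E' * matJ (Fin v) (Fin v) = 0 := by
    have h1 : (E' * A) * matJ (Fin v) (Fin v) = lam' • (E' * matJ (Fin v) (Fin v)) := by
      rw [hEA', Matrix.smul_mul]
    have h2 : E' * (A * matJ (Fin v) (Fin v)) = (k:ℝ) • (E' * matJ (Fin v) (Fin v)) := by
      rw [hAJ, Matrix.mul_smul]
    have h3 : (lam' - (k:ℝ)) • (E' * matJ (Fin v) (Fin v)) = 0 := by
      rw [sub_smul, ← h1, ← h2, Matrix.mul_assoc, sub_self]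
    rcases smul_eq_zero.mp h3 with h | h
    · exact absurd (sub_eq_zero.mp h) hlamk'
    · exact h
  have hEE' : E * E' = 0 := by
    have h1 : lam' • (E * E') = lam • (E * E') := by
      calc lam' • (E * E') = E * (lam' • E') := by rw [Matrix.mul_smul]
        _ = E * (A * E') := by rw [hAE']
        _ = (E * A) * E' := by rw [Matrix.mul_assoc]
        _ = lam • (E * E') := by rw [hEA, Matrix.smul_mul]
    have h3 : (lam - lam') • (E * E') = 0 := by
      rw [sub_smul, ← h1, sub_self]
    rcases smul_eq_zero.mp h3 with h | h
    · exact absurd (sub_eq_zero.mp h) hne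
    · exact h
  have hrowE : ∀ i, ∑ l, E i l = 0 := by
    intro i
    have h := congrFun (congrFun hEJ i) i
    simpa [Matrix.mul_apply, matJ] using h
  have hrowE' : ∀ i, ∑ l, E' i l = 0 := by
    intro i
    have h := congrFun (congrFun hEJ' i) i
    simpa [Matrix.mul_apply, matJ] using h
  have hm1 : ((m:ℝ)+1) ≠ 0 := by positivity
  have hm1' : ((m':ℝ)+1) ≠ 0 := by positivity
  obtain ⟨hKsymm, hKdiag, hKrows, hKsum⟩ :=
    key_struct hv ((m:ℝ)+1) hm1 E K hEs hEi hrowE hK01 hK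
  obtain ⟨hKsymm', hKdiag', hKrows', hKsum'⟩ :=
    key_struct hv ((m':ℝ)+1) hm1' E' K' hEs' hEi' hrowE' hK01' hK'
  have hEentry : ∀ i j, E i j = (((m:ℝ)+1)/v) * K i j - 1/v := by
    intro i j; rw [hK]; simp [matJ, Matrix.sub_apply, Matrix.smul_apply]
  have hEentry' : ∀ i j, E' i j = (((m':ℝ)+1)/v) * K' i j - 1/v := by
    intro i j; rw [hK']; simp [matJ, Matrix.sub_apply, Matrix.smul_apply]
  have hcnt : ∀ i j, (((m:ℝ)+1) * ((m':ℝ)+1)) * (∑ l, K i l * K' l j) = v := by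
    intro i j
    have h0 : ∑ l, E i l * E' l j = 0 := by
      have h := congrFun (congrFun hEE' i) j
      simpa [Matrix.mul_apply] using h
    rw [Finset.sum_congr rfl fun l _ => by rw [hEentry i l, hEentry' l j]] at h0
    have hexp : ∀ l : Fin v, ((((m:ℝ)+1)/v) * K i l - 1/v) * ((((m':ℝ)+1)/v) * K' l j - 1/v)
        = ((((m:ℝ)+1) * ((m':ℝ)+1))/((v:ℝ)*v)) * (K i l * K' l j)
          - (((m:ℝ)+1)/((v:ℝ)*v)) * K i l - (((m':ℝ)+1)/((v:ℝ)*v)) * K' l j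
          + 1/((v:ℝ)*v) := by
      intro l; field_simp; ring
    rw [Finset.sum_congr rfl fun l _ => hexp l] at h0
    rw [Finset.sum_add_distrib, Finset.sum_sub_distrib, Finset.sum_sub_distrib,
      ← Finset.mul_sum, ← Finset.mul_sum, ← Finset.mul_sum,
      Finset.sum_const, Finset.card_univ, Fintype.card_fin, nsmul_eq_mul] at h0
    have hKs : ∑ l, K i l = (v:ℝ) / ((m:ℝ)+1) := by
      rw [eq_div_iff hm1]; linarith [hKsum i]
    have hKs' : ∑ l, K' l j = (v:ℝ) / ((m':ℝ)+1) := by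
      rw [Finset.sum_congr rfl fun l _ => hKsymm' l j, eq_div_iff hm1']
      linarith [hKsum' j]
    rw [hKs, hKs'] at h0
    have e1 : (((m:ℝ)+1)/((v:ℝ)*v)) * ((v:ℝ)/((m:ℝ)+1)) = 1/v := by
      field_simp
      try ring
    have e2 : (((m':ℝ)+1)/((v:ℝ)*v)) * ((v:ℝ)/((m':ℝ)+1)) = 1/v := by
      field_simp
      try ring
    have e3 : (v:ℝ) * (1/((v:ℝ)*v)) = 1/v := by
      field_simp
      try ring
    rw [e1, e2, e3] at h0
    have h4 : ((((m:ℝ)+1) * ((m':ℝ)+1))/((v:ℝ)*v)) * (∑ l, K i l * K' l j) = 1/v := by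
      linarith
    calc (((m:ℝ)+1) * ((m':ℝ)+1)) * (∑ l, K i l * K' l j)
        = ((v:ℝ)*v) * (((((m:ℝ)+1) * ((m':ℝ)+1))/((v:ℝ)*v)) * (∑ l, K i l * K' l j)) := by
          field_simp
          try ring
      _ = ((v:ℝ)*v) * (1/v) := by rw [h4]
      _ = v := by field_simp
  have hcard : ∀ i j, (((m:ℝ)+1) * ((m':ℝ)+1)) *
      ((Finset.univ.filter fun l => K i l = 1 ∧ K' l j = 1).card : ℝ) = v := by
    intro i j
    have hsum01 : ((Finset.univ.filter fun l => K i l = 1 ∧ K' l j = 1).card : ℝ)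
        = ∑ l, K i l * K' l j := by
      rw [Finset.card_filter]
      push_cast
      refine Finset.sum_congr rfl fun l _ => ?_
      rcases hK01 i l with h | h <;> rcases hK01' l j with h' | h' <;> simp [h, h']
    rw [hsum01]
    exact hcnt i j
  have habne : (((m:ℝ)+1) * ((m':ℝ)+1)) ≠ 0 := mul_ne_zero hm1 hm1'
  set i0 : Fin v := ⟨0, hvpos⟩ with hi0
  set L : ℕ := (Finset.univ.filter fun l => K i0 l = 1 ∧ K' l i0 = 1).card with hLdef
  have hLcards : ∀ i j, (Finset.univ.filter fun l => K i l = 1 ∧ K' l j = 1).card = L := by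
    intro i j
    have h1 := hcard i j
    have h2 := hcard i0 i0
    have h3 : ((Finset.univ.filter fun l => K i l = 1 ∧ K' l j = 1).card : ℝ) = (L:ℝ) :=
      mul_left_cancel₀ habne (h1.trans h2.symm)
    exact_mod_cast h3
  have hLv : (m+1) * (m'+1) * L = v := by
    have h1 := hcard i0 i0
    have h2 : (((m+1) * (m'+1) * L : ℕ) : ℝ) = (v:ℝ) := by
      push_cast
      linarith [h1]
    exact_mod_cast h2
  have hdvd : (m+1)*(m'+1) ∣ v := ⟨L, hLv.symm⟩
  have hldiv : v / ((m+1)*(m'+1)) = L := by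
    rw [← hLv, Nat.mul_div_cancel_left]
    positivity
  obtain ⟨g, hgsurj, hg⟩ := partition_equiv hv K hK01 hKsymm hKdiag hKrows hKsum
  obtain ⟨g', hgsurj', hg'⟩ := partition_equiv hv K' hK01' hKsymm' hKdiag' hKrows' hKsum'
  set f : Fin v → Fin (m'+1) × Fin (m+1) := fun x => (g' x, g x) with hf
  have hfibcard : ∀ p : Fin (m'+1) × Fin (m+1),
      Fintype.card {x // f x = p} = v / ((m+1)*(m'+1)) := by
    intro p
    rw [hldiv]
    obtain ⟨i, hi⟩ := hgsurj p.2
    obtain ⟨j, hj⟩ := hgsurj' p.1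
    have hiff : ∀ x, f x = p ↔ (K i x = 1 ∧ K' x j = 1) := by
      intro x
      constructor
      · intro h
        have h1 : g' x = p.1 := congrArg Prod.fst h
        have h2 : g x = p.2 := congrArg Prod.snd h
        refine ⟨?_, (hg' x j).mp (h1.trans hj.symm)⟩
        rw [hKsymm]
        exact (hg x i).mp (h2.trans hi.symm)
      · rintro ⟨h1, h2⟩
        have hgx : g x = p.2 := ((hg x i).mpr (by rw [hKsymm x i]; exact h1)).trans hi
        have hgx' : g' x = p.1 := ((hg' x j).mpr h2).trans hj
        rw [hf]
        rw [Prod.ext_iff]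
        exact ⟨hgx', hgx⟩
    have hcc : Fintype.card {x // f x = p}
        = (Finset.univ.filter fun x => K i x = 1 ∧ K' x j = 1).card := by
      rw [Fintype.card_subtype]
      congr 1
      apply Finset.filter_congr
      intro x _
      exact hiff x
    rw [hcc, hLcards i j]
  let e : Fin v ≃ Fin (m'+1) × Fin (m+1) × Fin (v / ((m+1)*(m'+1))) :=
    ((Equiv.sigmaFiberEquiv f).symm.trans
      ((Equiv.sigmaCongrRight fun p => Fintype.equivFinOfCardEq (hfibcard p)).trans
        ((Equiv.sigmaEquivProd _ _).trans (Equiv.prodAssoc _ _ _))))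
  have he1 : ∀ x, (e x).1 = g' x := fun x => rfl
  have he2 : ∀ x, (e x).2.1 = g x := fun x => rfl
  refine ⟨hdvd, e, ?_, ?_⟩
  · intro i j
    rcases hK01 i j with h | h
    · have hne2 : (e i).2.1 ≠ (e j).2.1 := by
        rw [he2, he2]
        intro hgij
        have hq := (hg i j).mp hgij
        rw [h] at hq
        exact absurd hq (by norm_num)
      rw [h]
      simp [Matrix.kroneckerMap_apply, matJ, Matrix.one_apply, hne2]
    · have heq2 : (e i).2.1 = (e j).2.1 := by
        rw [he2, he2]
        exact (hg i j).mpr h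
      rw [h]
      simp [Matrix.kroneckerMap_apply, matJ, Matrix.one_apply, heq2]
  · intro i j
    rcases hK01' i j with h | h
    · have hne1 : (e i).1 ≠ (e j).1 := by
        rw [he1, he1]
        intro hgij
        have hq := (hg' i j).mp hgij
        rw [h] at hq
        exact absurd hq (by norm_num)
      rw [h]
      simp [Matrix.kroneckerMap_apply, matJ, Matrix.one_apply, hne1]
    · have heq1 : (e i).1 = (e j).1 := by
        rw [he1, he1]
        exact (hg' i j).mpr h
      rw [h]
      simp [Matrix.kroneckerMap_apply, matJ, Matrix.one_apply, heq1]
end
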